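/- arXiv:1112.5456 — 6 statements merged into one kernel-verified Lean document; each statement's English description precedes it below -/
import Mathlib

section
/- Let X_1, ..., X_n be {0,1}-valued random variables on a probability space, and suppose there are reals δ_1, ..., δ_n ∈ [0,1] such that for every subset S ⊆ {1,...,n} one has Pr[∀ i ∈ S, X_i = 1] ≤ ∏_{i∈S} δ_i. Set δ = (1/n)∑_{i=1}^n δ_i and let γ satisfy δ ≤ γ ≤ 1. Then Pr[∑_{i=1}^n X_i ≥ γ·n] ≤ exp(−n·D(γ‖δ)). -/
/-!
For `c ≥ 0`, a `{0,1}`-valued family satisfies `∏ i, (1 + c X_i) = (1 + c) ^ ∑ i, X_i`, and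
expanding the product gives
`E[∏ i, (1 + c X_i)] = ∑_S c^|S| Pr[∀ i ∈ S, X_i = 1] ≤ ∏ i, (1 + c δ_i)`,
exactly as if the `X_i` were independent with means `δ_i`. Markov's inequality and AM-GM then give
`Pr[∑ X_i ≥ γn] ≤ ((1 + cδ) / (1 + c)^γ)^n`, and the optimal choice of `1 + c` turns the base
into `exp (-D(γ‖δ))`. The endpoint `γ = 1` is the hypothesis for `S = univ`, again with AM-GM.
-/

open MeasureTheory

/-- Binary relative entropy `D(p‖q)`, with the conventions `0·log 0 = 0` and
`0·log(0/0) = 0` (automatic from `Real.log 0 = 0` and `x/0 = 0` in Lean). -/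
noncomputable def binRelEnt (p q : ℝ) : ℝ :=
  p * Real.log (p / q) + (1 - p) * Real.log ((1 - p) / (1 - q))

open Finset

namespace Real

theorem prod_le_sum_div_card_pow {ι : Type*} (s : Finset ι) {z : ι → ℝ} (hz : ∀ i ∈ s, 0 ≤ z i) :
    ∏ i ∈ s, z i ≤ ((∑ i ∈ s, z i) / #s) ^ #s := by
  rcases s.eq_empty_or_nonempty with rfl | hs
  · simp
  have hcard : (0 : ℝ) < #s := by exact_mod_cast hs.card_pos
  have amgm := geom_mean_le_arith_mean s (fun _ ↦ 1) z (fun _ _ ↦ zero_le_one)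
    (by simpa using hcard) hz
  simp only [rpow_one, sum_const, nsmul_eq_mul, mul_one, one_mul] at amgm
  calc ∏ i ∈ s, z i = ((∏ i ∈ s, z i) ^ (#s : ℝ)⁻¹) ^ #s := by
        rw [← rpow_mul_natCast (prod_nonneg hz), inv_mul_cancel₀ hcard.ne', rpow_one]
    _ ≤ ((∑ i ∈ s, z i) / #s) ^ #s := by gcongr; exact rpow_nonneg (prod_nonneg hz) _

theorem prod_one_add_mul_le_pow {ι : Type*} (s : Finset ι) {c : ℝ} (hc : 0 ≤ c) {δ : ι → ℝ}
    (hδ : ∀ i ∈ s, 0 ≤ δ i) :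
    ∏ i ∈ s, (1 + c * δ i) ≤ (1 + c * ((∑ i ∈ s, δ i) / #s)) ^ #s := by
  rcases s.eq_empty_or_nonempty with rfl | hs
  · simp
  have hcard : (#s : ℝ) ≠ 0 := by exact_mod_cast hs.card_pos.ne'
  convert prod_le_sum_div_card_pow s fun i hi ↦ add_nonneg zero_le_one (mul_nonneg hc (hδ i hi))
    using 2
  rw [sum_add_distrib, ← mul_sum, sum_const, nsmul_one]
  field_simp

end Real

/-- The minimiser over `L ≥ 1` of `(1 + (L - 1) q) / L ^ p`. -/
noncomputable def chernoffTilt (p q : ℝ) : ℝ := p * (1 - q) / (q * (1 - p))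

theorem one_le_chernoffTilt {p q : ℝ} (hq : 0 < q) (hqp : q ≤ p) (hp : p < 1) :
    1 ≤ chernoffTilt p q := by
  rw [chernoffTilt, one_le_div (mul_pos hq (by linarith))]
  nlinarith

theorem binRelEnt_self (p : ℝ) : binRelEnt p p = 0 := by
  simp [binRelEnt]

theorem binRelEnt_zero_right_nonpos {p : ℝ} (hp₀ : 0 ≤ p) (hp₁ : p ≤ 1) : binRelEnt p 0 ≤ 0 := by
  simp only [binRelEnt, div_zero, Real.log_zero, mul_zero, sub_zero, div_one, zero_add]
  exact mul_nonpos_of_nonneg_of_nonpos (by linarith) (Real.log_nonpos (by linarith) (by linarith))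

theorem exp_neg_binRelEnt_one_left {q : ℝ} (hq : 0 < q) : Real.exp (-binRelEnt 1 q) = q := by
  simp [binRelEnt, Real.log_inv, Real.exp_log hq]

theorem exp_neg_binRelEnt_eq {p q : ℝ} (hq₀ : 0 < q) (hqp : q < p) (hp₁ : p < 1) :
    Real.exp (-binRelEnt p q) =
      (1 + (chernoffTilt p q - 1) * q) / chernoffTilt p q ^ p := by
  have hp₀ : 0 < p := hq₀.trans hqp
  have h1p : 0 < 1 - p := by linarith
  have h1q : 0 < 1 - q := by linarith
  have hbase : 1 + (chernoffTilt p q - 1) * q = (1 - q) / (1 - p) := by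
    rw [chernoffTilt]; field_simp; ring
  have hL : 0 < chernoffTilt p q := by unfold chernoffTilt; positivity
  rw [hbase, Real.rpow_def_of_pos hL, ← Real.exp_log (div_pos h1q h1p), ← Real.exp_sub]
  congr 1
  simp only [binRelEnt, chernoffTilt, Real.log_div, Real.log_mul, hp₀.ne', hq₀.ne', h1p.ne',
    h1q.ne', mul_ne_zero, ne_eq, not_false_eq_true]
  ring

section ZeroOne

variable {Ω ι : Type*} {X : ι → Ω → ℝ}

theorem ofReal_prod_eq_indicator_one (hX : ∀ i ω, X i ω = 0 ∨ X i ω = 1) (s : Finset ι) (ω : Ω) :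
    ENNReal.ofReal (∏ i ∈ s, X i ω) = {ω | ∀ i ∈ s, X i ω = 1}.indicator 1 ω := by
  by_cases h : ∀ i ∈ s, X i ω = 1
  · simp [Set.indicator_of_mem (show ω ∈ {ω | ∀ i ∈ s, X i ω = 1} from h), prod_eq_one h]
  · push Not at h
    obtain ⟨i, hi, hXi⟩ := h
    rw [Set.indicator_of_notMem (fun h' ↦ hXi (h' i hi) : ω ∉ {ω | ∀ i ∈ s, X i ω = 1}),
      prod_eq_zero hi ((hX i ω).resolve_right hXi), ENNReal.ofReal_zero]

theorem prod_one_add_mul_eq_rpow_sum (hX : ∀ i ω, X i ω = 0 ∨ X i ω = 1) {L : ℝ} (hL : 0 < L)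
    (s : Finset ι) (ω : Ω) :
    ∏ i ∈ s, (1 + (L - 1) * X i ω) = L ^ ∑ i ∈ s, X i ω := by
  rw [Real.rpow_sum_of_pos hL]
  refine prod_congr rfl fun i _ ↦ ?_
  rcases hX i ω with h | h <;> simp [h]

variable [MeasurableSpace Ω] {μ : Measure Ω} [Fintype ι] {δ : ι → ℝ}

theorem lintegral_prod_one_add_mul_le (hXm : ∀ i, Measurable (X i))
    (hX : ∀ i ω, X i ω = 0 ∨ X i ω = 1) (hδ : ∀ i, 0 ≤ δ i)
    (hbound : ∀ S : Finset ι, μ {ω | ∀ i ∈ S, X i ω = 1} ≤ ENNReal.ofReal (∏ i ∈ S, δ i))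
    {c : ℝ} (hc : 0 ≤ c) :
    ∫⁻ ω, ENNReal.ofReal (∏ i, (1 + c * X i ω)) ∂μ ≤ ENNReal.ofReal (∏ i, (1 + c * δ i)) := by
  have hXnn : ∀ i ω, 0 ≤ X i ω := fun i ω ↦ by rcases hX i ω with h | h <;> simp [h]
  have hterm : ∀ S : Finset ι, ∫⁻ ω, ENNReal.ofReal (∏ i ∈ S, c * X i ω) ∂μ ≤
      ENNReal.ofReal (∏ i ∈ S, c * δ i) := by
    intro S
    have hA : MeasurableSet {ω | ∀ i ∈ S, X i ω = 1} := by
      simp only [Set.ofPred_forall]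
      exact .biInter S.countable_toSet fun i _ ↦ measurableSet_eq_fun (hXm i) measurable_const
    simp only [prod_mul_distrib, prod_const, ENNReal.ofReal_mul (pow_nonneg hc _),
      ofReal_prod_eq_indicator_one hX]
    rw [lintegral_const_mul' _ _ ENNReal.ofReal_ne_top, lintegral_indicator_one hA]
    gcongr; exact hbound S
  calc ∫⁻ ω, ENNReal.ofReal (∏ i, (1 + c * X i ω)) ∂μ
      = ∫⁻ ω, ∑ S : Finset ι, ENNReal.ofReal (∏ i ∈ S, c * X i ω) ∂μ := by
        refine lintegral_congr fun ω ↦ ?_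
        rw [prod_one_add, powerset_univ, ENNReal.ofReal_sum_of_nonneg fun S _ ↦
          prod_nonneg fun i _ ↦ mul_nonneg hc (hXnn i ω)]
    _ = ∑ S : Finset ι, ∫⁻ ω, ENNReal.ofReal (∏ i ∈ S, c * X i ω) ∂μ :=
        lintegral_finsetSum _ fun S _ ↦ by fun_prop
    _ ≤ ∑ S : Finset ι, ENNReal.ofReal (∏ i ∈ S, c * δ i) := sum_le_sum fun S _ ↦ hterm S
    _ = ENNReal.ofReal (∏ i, (1 + c * δ i)) := by
        rw [prod_one_add, powerset_univ, ← ENNReal.ofReal_sum_of_nonneg fun S _ ↦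
          prod_nonneg fun i _ ↦ mul_nonneg hc (hδ i)]

theorem measure_le_sum_le_div_rpow (hXm : ∀ i, Measurable (X i))
    (hX : ∀ i ω, X i ω = 0 ∨ X i ω = 1) (hδ : ∀ i, 0 ≤ δ i)
    (hbound : ∀ S : Finset ι, μ {ω | ∀ i ∈ S, X i ω = 1} ≤ ENNReal.ofReal (∏ i ∈ S, δ i))
    {L : ℝ} (hL : 1 ≤ L) (t : ℝ) :
    μ {ω | t ≤ ∑ i, X i ω} ≤ ENNReal.ofReal ((∏ i, (1 + (L - 1) * δ i)) / L ^ t) := by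
  have hLt : 0 < L ^ t := Real.rpow_pos_of_pos (by linarith) t
  have hsub : {ω | t ≤ ∑ i, X i ω} ⊆
      {ω | ENNReal.ofReal (L ^ t) ≤ ENNReal.ofReal (∏ i, (1 + (L - 1) * X i ω))} := by
    intro ω hω
    rw [Set.mem_ofPred_eq, prod_one_add_mul_eq_rpow_sum hX (by linarith)]
    exact ENNReal.ofReal_le_ofReal (Real.rpow_le_rpow_of_exponent_le hL hω)
  rw [ENNReal.ofReal_div_of_pos hLt, ENNReal.le_div_iff_mul_le
    (.inl (ENNReal.ofReal_pos.2 hLt).ne') (.inl ENNReal.ofReal_ne_top), mul_comm]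
  calc ENNReal.ofReal (L ^ t) * μ {ω | t ≤ ∑ i, X i ω}
      ≤ ENNReal.ofReal (L ^ t) *
          μ {ω | ENNReal.ofReal (L ^ t) ≤ ENNReal.ofReal (∏ i, (1 + (L - 1) * X i ω))} := by
        gcongr
    _ ≤ ∫⁻ ω, ENNReal.ofReal (∏ i, (1 + (L - 1) * X i ω)) ∂μ :=
        mul_meas_ge_le_lintegral₀ (by fun_prop) _
    _ ≤ ENNReal.ofReal (∏ i, (1 + (L - 1) * δ i)) :=
        lintegral_prod_one_add_mul_le hXm hX hδ hbound (by linarith)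

theorem measure_card_le_sum_le_prod (hX : ∀ i ω, X i ω = 0 ∨ X i ω = 1)
    (hbound : μ {ω | ∀ i ∈ univ, X i ω = 1} ≤ ENNReal.ofReal (∏ i, δ i)) :
    μ {ω | (Fintype.card ι : ℝ) ≤ ∑ i, X i ω} ≤ ENNReal.ofReal (∏ i, δ i) := by
  refine le_trans (measure_mono fun ω hω ↦ ?_) hbound
  have hle : ∀ i ∈ univ, X i ω ≤ 1 := fun i _ ↦ by rcases hX i ω with h | h <;> simp [h]
  have hsum : ∑ i, X i ω ≤ Fintype.card ι := by simpa using sum_le_sum hle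
  rw [Set.mem_ofPred_eq, ← sum_eq_sum_iff_of_le hle]
  simpa using le_antisymm hsum hω

end ZeroOne

theorem generalized_chernoff_hoeffding_general
    {Ω : Type*} [MeasurableSpace Ω] (μ : Measure Ω) [IsProbabilityMeasure μ]
    (n : ℕ) (X : Fin n → Ω → ℝ)
    (hXmeas : ∀ i, Measurable (X i))
    (hX01 : ∀ i ω, X i ω = 0 ∨ X i ω = 1)
    (δ : Fin n → ℝ) (hδ : ∀ i, δ i ∈ Set.Icc (0 : ℝ) 1)
    (hbound : ∀ S : Finset (Fin n),
      μ {ω | ∀ i ∈ S, X i ω = 1} ≤ ENNReal.ofReal (∏ i ∈ S, δ i))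
    (γ : ℝ) (hγ₁ : (∑ i, δ i) / n ≤ γ) (hγ₂ : γ ≤ 1) :
    μ {ω | γ * n ≤ ∑ i, X i ω} ≤
      ENNReal.ofReal (Real.exp (-(n : ℝ) * binRelEnt γ ((∑ i, δ i) / n))) := by
  set d := (∑ i, δ i) / n
  have hδ₀ : ∀ i, 0 ≤ δ i := fun i ↦ (hδ i).1
  have hd₀ : 0 ≤ d := div_nonneg (sum_nonneg fun i _ ↦ hδ₀ i) n.cast_nonneg
  rcases le_or_gt (binRelEnt γ d) 0 with hD | hD
  · exact prob_le_one.trans (ENNReal.one_le_ofReal.2 (Real.one_le_exp (by nlinarith)))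
  have hd : 0 < d := hd₀.lt_of_ne fun h ↦ hD.not_ge <|
    h ▸ binRelEnt_zero_right_nonpos (hd₀.trans hγ₁) hγ₂
  have hdγ : d < γ := hγ₁.lt_of_ne fun h ↦ hD.ne' (h ▸ binRelEnt_self d)
  rw [show -(n : ℝ) * binRelEnt γ d = n * -binRelEnt γ d by ring, Real.exp_nat_mul]
  rcases hγ₂.lt_or_eq with hγ | rfl
  · have hL := one_le_chernoffTilt hd hdγ.le hγ
    set L := chernoffTilt γ d
    calc μ {ω | γ * n ≤ ∑ i, X i ω}
        ≤ ENNReal.ofReal ((∏ i, (1 + (L - 1) * δ i)) / L ^ (γ * n)) :=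
          measure_le_sum_le_div_rpow hXmeas hX01 hδ₀ hbound hL _
      _ ≤ ENNReal.ofReal ((1 + (L - 1) * d) ^ n / L ^ (γ * n)) := by
          gcongr
          simpa using Real.prod_one_add_mul_le_pow univ (by linarith) fun i _ ↦ hδ₀ i
      _ = ENNReal.ofReal (Real.exp (-binRelEnt γ d) ^ n) := by
          rw [exp_neg_binRelEnt_eq hd hdγ hγ, div_pow, Real.rpow_mul_natCast (by linarith)]
  · calc μ {ω | 1 * n ≤ ∑ i, X i ω}
        ≤ ENNReal.ofReal (∏ i, δ i) := by
          simpa using measure_card_le_sum_le_prod hX01 (hbound univ)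
      _ ≤ ENNReal.ofReal (d ^ n) := by
          gcongr
          simpa using Real.prod_le_sum_div_card_pow univ fun i _ ↦ hδ₀ i
      _ = ENNReal.ofReal (Real.exp (-binRelEnt 1 d) ^ n) := by
          rw [exp_neg_binRelEnt_one_left hd]

/-- Generalized Chernoff-Hoeffding bound for dependent Boolean random variables
(Panconesi–Srinivasan). -/
theorem generalized_chernoff_hoeffding
    {Ω : Type*} [MeasurableSpace Ω] (μ : Measure Ω) [IsProbabilityMeasure μ]
    (n : ℕ) (hn : 0 < n) (X : Fin n → Ω → ℝ)
    (hXmeas : ∀ i, Measurable (X i))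
    (hX01 : ∀ i ω, X i ω = 0 ∨ X i ω = 1)
    (δ : Fin n → ℝ) (hδ : ∀ i, δ i ∈ Set.Icc (0 : ℝ) 1)
    (hbound : ∀ S : Finset (Fin n),
      μ {ω | ∀ i ∈ S, X i ω = 1} ≤ ENNReal.ofReal (∏ i ∈ S, δ i))
    (γ : ℝ) (hγ₁ : (∑ i, δ i) / n ≤ γ) (hγ₂ : γ ≤ 1) :
    μ {ω | γ * n ≤ ∑ i, X i ω} ≤
      ENNReal.ofReal (Real.exp (-(n : ℝ) * binRelEnt γ ((∑ i, δ i) / n))) :=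
  generalized_chernoff_hoeffding_general μ n X hXmeas hX01 δ hδ hbound γ hγ₁ hγ₂
end

section
/- Let X_1, ..., X_n be real-valued random variables on a probability space with each X_i ∈ [0,1] almost surely. Suppose there is δ with 0 ≤ δ ≤ 1 such that for every subset S ⊆ {1,...,n} one has E[∏_{i∈S} X_i] ≤ δ^{|S|}, and let γ satisfy δ ≤ γ ≤ 1 with γ·n an integer. Then Pr[∑_{i=1}^n X_i ≥ γ·n] ≤ 2·exp(−n·D(γ‖δ)). -/
/-!
Chernoff's method with the tilted product `∏ i, ((1 - a) X i + a)` in place of `exp (t ∑ i, X i)`: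
expanding the product writes its mean as a combination of the moments `E[∏ i ∈ S, X i]` with
nonnegative coefficients, so it is at most `((1 - a) δ + a) ^ n`; on the other hand
`a ^ (1 - x) ≤ (1 - a) x + a` on `[0, 1]`, so on the event `γ n ≤ ∑ i, X i` the product is at least
`a ^ ((1 - γ) n)`. Markov's inequality and the choice `a = δ (1 - γ) / (γ (1 - δ))` give
`exp (-n D(γ‖δ))`.
-/

open MeasureTheory

open Finset Real

theorem prod_mul_add_eq_sum_powerset {ι R : Type*} [CommSemiring R] [DecidableEq ι]
    (s : Finset ι) (p q : R) (x : ι → R) :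
    ∏ i ∈ s, (p * x i + q) =
      ∑ t ∈ s.powerset, p ^ t.card * q ^ (s.card - t.card) * ∏ i ∈ t, x i := by
  rw [prod_add]
  refine sum_congr rfl fun t ht => ?_
  rw [prod_mul_distrib, prod_const, prod_const, card_sdiff_of_subset (mem_powerset.1 ht)]
  ring

theorem rpow_one_sub_le {a x : ℝ} (ha : 0 ≤ a) (hx : x ∈ Set.Icc (0 : ℝ) 1) :
    a ^ (1 - x) ≤ (1 - a) * x + a := by
  have h := geom_mean_le_arith_mean2_weighted (sub_nonneg.2 hx.2) hx.1 ha zero_le_one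
    (sub_add_cancel 1 x)
  rw [one_rpow, mul_one] at h
  linarith

theorem rpow_le_prod_of_le_sum {ι : Type*} [Fintype ι] {a γ : ℝ} {x : ι → ℝ}
    (ha : a ∈ Set.Icc (0 : ℝ) 1) (hx : ∀ i, x i ∈ Set.Icc (0 : ℝ) 1)
    (hsum : γ * Fintype.card ι ≤ ∑ i, x i) :
    a ^ ((1 - γ) * Fintype.card ι) ≤ ∏ i, ((1 - a) * x i + a) := by
  have hexp : ∑ i, (1 - x i) = Fintype.card ι - ∑ i, x i := by
    simp [sum_sub_distrib]
  calc a ^ ((1 - γ) * Fintype.card ι)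
      ≤ a ^ ∑ i, (1 - x i) :=
        rpow_le_rpow_of_exponent_ge' ha.1 ha.2
          (sum_nonneg fun i _ => sub_nonneg.2 (hx i).2) (by rw [hexp]; linarith)
    _ = ∏ i, a ^ (1 - x i) := rpow_sum_of_nonneg ha.1 fun i _ => sub_nonneg.2 (hx i).2
    _ ≤ ∏ i, ((1 - a) * x i + a) :=
        prod_le_prod (fun i _ => rpow_nonneg ha.1 _) fun i _ => rpow_one_sub_le ha.1 (hx i)

section Moments

variable {Ω ι : Type*} [MeasurableSpace Ω] {μ : Measure Ω} {X : ι → Ω → ℝ}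

theorem integrable_prod_of_ae_mem_Icc [IsFiniteMeasure μ] (hX : ∀ i, Measurable (X i))
    (hX01 : ∀ᵐ ω ∂μ, ∀ i, X i ω ∈ Set.Icc (0 : ℝ) 1) (S : Finset ι) :
    Integrable (fun ω => ∏ i ∈ S, X i ω) μ := by
  refine (integrable_const (1 : ℝ)).mono'
    (S.measurable_prod fun i _ => hX i).aestronglyMeasurable ?_
  filter_upwards [hX01] with ω h
  rw [norm_eq_abs, abs_of_nonneg (prod_nonneg fun i _ => (h i).1)]
  exact prod_le_one (fun i _ => (h i).1) fun i _ => (h i).2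

theorem integrable_prod_mul_add_and_integral_le [Fintype ι] [IsFiniteMeasure μ]
    (hX : ∀ i, Measurable (X i)) (hX01 : ∀ᵐ ω ∂μ, ∀ i, X i ω ∈ Set.Icc (0 : ℝ) 1)
    {δ : ℝ} (hbound : ∀ S : Finset ι, ∫ ω, ∏ i ∈ S, X i ω ∂μ ≤ δ ^ S.card)
    {p q : ℝ} (hp : 0 ≤ p) (hq : 0 ≤ q) :
    Integrable (fun ω => ∏ i, (p * X i ω + q)) μ ∧
      ∫ ω, ∏ i, (p * X i ω + q) ∂μ ≤ (p * δ + q) ^ Fintype.card ι := by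
  classical
  simp only [prod_mul_add_eq_sum_powerset]
  have hint := fun t : Finset ι => (integrable_prod_of_ae_mem_Icc hX hX01 t).const_mul
    (p ^ t.card * q ^ ((univ : Finset ι).card - t.card))
  refine ⟨integrable_finsetSum _ fun t _ => hint t, ?_⟩
  rw [integral_finsetSum _ fun t _ => hint t, ← Finset.card_univ, ← prod_const,
    prod_mul_add_eq_sum_powerset]
  refine sum_le_sum fun t _ => ?_
  rw [integral_const_mul, prod_const]
  exact mul_le_mul_of_nonneg_left (hbound t) (by positivity)

theorem rpow_mul_measureReal_le_pow [Fintype ι] [IsFiniteMeasure μ]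
    (hX : ∀ i, Measurable (X i)) (hX01 : ∀ᵐ ω ∂μ, ∀ i, X i ω ∈ Set.Icc (0 : ℝ) 1)
    {δ : ℝ} (hbound : ∀ S : Finset ι, ∫ ω, ∏ i ∈ S, X i ω ∂μ ≤ δ ^ S.card)
    (γ : ℝ) {a : ℝ} (ha : a ∈ Set.Icc (0 : ℝ) 1) :
    a ^ ((1 - γ) * Fintype.card ι) * μ.real {ω | γ * Fintype.card ι ≤ ∑ i, X i ω} ≤
      ((1 - a) * δ + a) ^ Fintype.card ι := by
  set c := a ^ ((1 - γ) * Fintype.card ι)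
  obtain ⟨hint, hle⟩ :=
    integrable_prod_mul_add_and_integral_le hX hX01 hbound (sub_nonneg.2 ha.2) ha.1
  have hnonneg : 0 ≤ᵐ[μ] fun ω => ∏ i, ((1 - a) * X i ω + a) := by
    filter_upwards [hX01] with ω h
    exact prod_nonneg fun i _ => add_nonneg (mul_nonneg (sub_nonneg.2 ha.2) (h i).1) ha.1
  have hsub : {ω | γ * Fintype.card ι ≤ ∑ i, X i ω} ≤ᵐ[μ]
      {ω | c ≤ ∏ i, ((1 - a) * X i ω + a)} := by
    filter_upwards [hX01] with ω h hω
    exact rpow_le_prod_of_le_sum ha h hω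
  calc c * μ.real {ω | γ * Fintype.card ι ≤ ∑ i, X i ω}
      ≤ c * μ.real {ω | c ≤ ∏ i, ((1 - a) * X i ω + a)} :=
        mul_le_mul_of_nonneg_left (ENNReal.toReal_mono (measure_ne_top _ _)
          (measure_mono_ae hsub)) (rpow_nonneg ha.1 _)
    _ ≤ _ := mul_meas_ge_le_integral_of_nonneg hnonneg hint c
    _ ≤ _ := hle

end Moments

theorem binRelEnt_zero_right_nonpos_s1 {p : ℝ} (hp : p ∈ Set.Icc (0 : ℝ) 1) :
    binRelEnt p 0 ≤ 0 := by
  simp only [binRelEnt, div_zero, log_zero, mul_zero, sub_zero, div_one, zero_add]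
  exact mul_nonpos_of_nonneg_of_nonpos (sub_nonneg.2 hp.2)
    (log_nonpos (sub_nonneg.2 hp.2) (sub_le_self 1 hp.1))

theorem exists_pow_eq_rpow_mul_exp_neg_binRelEnt {γ δ : ℝ} (hδ : 0 < δ) (hδγ : δ ≤ γ)
    (hγ : γ ≤ 1) (n : ℕ) :
    ∃ a ∈ Set.Icc (0 : ℝ) 1, 0 < a ^ ((1 - γ) * n) ∧
      ((1 - a) * δ + a) ^ n = a ^ ((1 - γ) * n) * exp (-n * binRelEnt γ δ) := by
  rcases hγ.eq_or_lt with rfl | hγ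
  · refine ⟨0, ⟨le_rfl, zero_le_one⟩, by simp, ?_⟩
    simp [binRelEnt, log_inv, ← log_pow, exp_log (pow_pos hδ n)]
  have hγ0 : 0 < γ := hδ.trans_le hδγ
  have hδ1 : 0 < 1 - δ := by linarith
  have hγ1 : 0 < 1 - γ := by linarith
  set a := δ * (1 - γ) / (γ * (1 - δ)) with ha_def
  have ha : 0 < a := by positivity
  have hlin : (1 - a) * δ + a = δ / γ := by
    rw [ha_def]; field_simp; ring
  refine ⟨a, ⟨ha.le, div_le_one_of_le₀ (by nlinarith) (by positivity)⟩, by positivity, ?_⟩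
  rw [hlin, rpow_def_of_pos ha, ← exp_add, ← exp_log (pow_pos (div_pos hδ hγ0) n), log_pow]
  congr 1
  have hlog : log a = log δ + log (1 - γ) - (log γ + log (1 - δ)) := by
    rw [ha_def, log_div (by positivity) (by positivity), log_mul hδ.ne' hγ1.ne',
      log_mul hγ0.ne' hδ1.ne']
  rw [binRelEnt, hlog, log_div hδ.ne' hγ0.ne', log_div hγ0.ne' hδ.ne', log_div hγ1.ne' hδ1.ne']
  ring

theorem generalized_chernoff_real_valued_general
    {Ω : Type*} [MeasurableSpace Ω] (μ : Measure Ω) [IsProbabilityMeasure μ]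
    (n : ℕ) (X : Fin n → Ω → ℝ)
    (hXmeas : ∀ i, Measurable (X i))
    (hX01 : ∀ᵐ ω ∂μ, ∀ i, X i ω ∈ Set.Icc (0 : ℝ) 1)
    (δ : ℝ) (hδ : δ ∈ Set.Icc (0 : ℝ) 1)
    (hbound : ∀ S : Finset (Fin n), ∫ ω, (∏ i ∈ S, X i ω) ∂μ ≤ δ ^ S.card)
    (γ : ℝ) (hγ₁ : δ ≤ γ) (hγ₂ : γ ≤ 1) :
    μ {ω | γ * n ≤ ∑ i, X i ω} ≤
      ENNReal.ofReal (2 * Real.exp (-(n : ℝ) * binRelEnt γ δ)) := by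
  suffices h : μ.real {ω | γ * n ≤ ∑ i, X i ω} ≤ exp (-n * binRelEnt γ δ) by
    rw [← ofReal_measureReal]
    exact ENNReal.ofReal_le_ofReal (by linarith [exp_pos (-n * binRelEnt γ δ)])
  rcases hδ.1.eq_or_lt with rfl | hδ0
  · exact measureReal_le_one.trans
      (one_le_exp (mul_nonneg_of_nonpos_of_nonpos (neg_nonpos.2 n.cast_nonneg)
        (binRelEnt_zero_right_nonpos_s1 ⟨hγ₁, hγ₂⟩)))
  obtain ⟨a, ha, hpos, hpow⟩ := exists_pow_eq_rpow_mul_exp_neg_binRelEnt hδ0 hγ₁ hγ₂ n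
  have hmarkov := rpow_mul_measureReal_le_pow hXmeas hX01 hbound γ ha (μ := μ)
  rw [Fintype.card_fin, hpow] at hmarkov
  exact le_of_mul_le_mul_left hmarkov hpos

/-- Generalized Chernoff-Hoeffding bound for dependent `[0,1]`-valued random variables
(Impagliazzo–Kabanets, Theorem 3.3). -/
theorem generalized_chernoff_real_valued
    {Ω : Type*} [MeasurableSpace Ω] (μ : Measure Ω) [IsProbabilityMeasure μ]
    (n : ℕ) (hn : 0 < n) (X : Fin n → Ω → ℝ)
    (hXmeas : ∀ i, Measurable (X i))
    (hX01 : ∀ᵐ ω ∂μ, ∀ i, X i ω ∈ Set.Icc (0 : ℝ) 1)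
    (δ : ℝ) (hδ : δ ∈ Set.Icc (0 : ℝ) 1)
    (hbound : ∀ S : Finset (Fin n), ∫ ω, (∏ i ∈ S, X i ω) ∂μ ≤ δ ^ S.card)
    (γ : ℝ) (hγ₁ : δ ≤ γ) (hγ₂ : γ ≤ 1) (hγn : ∃ m : ℕ, γ * n = (m : ℝ)) :
    μ {ω | γ * n ≤ ∑ i, X i ω} ≤
      ENNReal.ofReal (2 * Real.exp (-(n : ℝ) * binRelEnt γ δ)) :=
  generalized_chernoff_real_valued_general μ n X hXmeas hX01 δ hδ hbound γ hγ₁ hγ₂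
end

section
/- The six single-qubit states form a quantum state 3-design: (1/6)·∑_{ρ ∈ Q̃} ρ ⊗ ρ ⊗ ρ = (1/4)·P_sym3, where P_sym3 = (1/6)·∑_{π ∈ S₃} U_π is the orthogonal projector onto the symmetric subspace of (ℂ²)^{⊗3}, the sum running over the six permutation operators U_π permuting the three tensor factors. -/
/-!
The entry of either side at basis strings `x, y ∈ {0,1}³` depends only on their Hamming weights
`a, b`. For a ket `ψ`, the entry of `(ψψ†)^{⊗3}` is `ψ₀^{3-a} ψ₁^a · conj (ψ₀^{3-b} ψ₁^b)`: the poles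
`|0⟩, |1⟩` give `[a = b = 0]` and `[a = b = 3]`, while the four equatorial kets `(1, ω)`, `ω⁴ = 1`,
give `(1/8) ∑_ω ω^a ω̄^b = (1/2)[a = b]` because `|a - b| < 4`. On the other side, the permutations
`π` with `x ∘ π = y` exist iff `a = b`, and then form a coset of the stabiliser of `x`, of order
`a! (3 - a)!`. Both sides are therefore `1/4` if `a = b ∈ {0, 3}`, `1/12` if `a = b ∈ {1, 2}`, and
`0` otherwise.
-/

open Matrix

noncomputable def qstate : Fin 6 → Matrix (Fin 2) (Fin 2) ℂ :=
  ![!![1, 0; 0, 0],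
    !![0, 0; 0, 1],
    !![1/2, 1/2; 1/2, 1/2],
    !![1/2, -(1/2); -(1/2), 1/2],
    !![1/2, -Complex.I/2; Complex.I/2, 1/2],
    !![1/2, Complex.I/2; -Complex.I/2, 1/2]]

noncomputable def tens3 (ρ : Matrix (Fin 2) (Fin 2) ℂ) :
    Matrix (Fin 3 → Fin 2) (Fin 3 → Fin 2) ℂ :=
  fun x y => ∏ i, ρ (x i) (y i)

def permOp (π : Equiv.Perm (Fin 3)) : Matrix (Fin 3 → Fin 2) (Fin 3 → Fin 2) ℂ :=
  fun x y => if ∀ i, x (π i) = y i then 1 else 0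

open Finset Equiv
open scoped Nat

section PermCount

variable {α ι : Type*} [Fintype α] [DecidableEq ι]

theorem exists_perm_comp_eq_iff {f g : α → ι} :
    (∃ π : Perm α, f ∘ π = g) ↔
      ∀ i, Fintype.card {a // f a = i} = Fintype.card {a // g a = i} := by
  constructor
  · rintro ⟨π, rfl⟩ i
    exact (Fintype.card_congr (π.subtypeEquiv fun _ => Iff.rfl)).symm
  · intro h
    refine ⟨ofFiberEquiv fun i => (Fintype.equivOfCardEq (h i)).symm, funext fun a => ?_⟩
    exact ofFiberEquiv_map _ a

variable [DecidableEq α]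

theorem card_perm_comp_eq_of_comp_eq {f g : α → ι} {π₀ : Perm α} (h : f ∘ π₀ = g) :
    #{π : Perm α | f ∘ π = g} = Fintype.card {σ : Perm α // f ∘ σ = f} := by
  rw [Fintype.card_subtype]
  refine card_equiv (Equiv.mulRight π₀⁻¹) fun π => ?_
  subst h
  simp only [mem_filter, mem_univ, true_and, coe_mulRight, funext_iff, Function.comp_apply]
  constructor
  · intro hπ a
    simpa using hπ (π₀⁻¹ a)
  · intro hπ a
    simpa using hπ (π₀ a)

theorem card_perm_comp_eq [Fintype ι] (f g : α → ι) :
    #{π : Perm α | f ∘ π = g} =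
      if ∀ i, Fintype.card {a // f a = i} = Fintype.card {a // g a = i} then
        ∏ i, (Fintype.card {a // f a = i})!
      else 0 := by
  split_ifs with h
  · obtain ⟨π₀, hπ₀⟩ := exists_perm_comp_eq_iff.mpr h
    rw [card_perm_comp_eq_of_comp_eq hπ₀, DomMulAct.stabilizer_card]
  · rw [Finset.card_eq_zero, filter_eq_empty_iff]
    exact fun π _ hπ => h (exists_perm_comp_eq_iff.mp ⟨π, hπ⟩)

end PermCount

section FinTwo

variable {α : Type*} [Fintype α]

theorem card_fiber_one_eq_hammingNorm (x : α → Fin 2) :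
    Fintype.card {a // x a = 1} = hammingNorm x := by
  rw [Fintype.card_subtype, hammingNorm]
  congr 1
  ext a
  simp only [mem_filter, mem_univ, true_and]
  omega

theorem card_fiber_zero_eq_card_sub_hammingNorm (x : α → Fin 2) :
    Fintype.card {a // x a = 0} = Fintype.card α - hammingNorm x := by
  rw [Fintype.card_subtype, hammingNorm, ← Finset.card_univ,
    ← card_filter_add_card_filter_not (s := univ) (fun a => x a = 0)]
  simp

theorem prod_comp_fin_two_eq_pow_hammingNorm {M : Type*} [CommMonoid M] (v : Fin 2 → M) (x : α → Fin 2) :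
    ∏ a, v (x a) = v 0 ^ (Fintype.card α - hammingNorm x) * v 1 ^ hammingNorm x := by
  rw [← prod_fiberwise univ x, Fin.prod_univ_two, ← card_fiber_zero_eq_card_sub_hammingNorm,
    ← card_fiber_one_eq_hammingNorm, Fintype.card_subtype, Fintype.card_subtype]
  congr 1 <;> exact prod_eq_pow_card fun a ha => by rw [(mem_filter.mp ha).2]

theorem card_perm_comp_eq_fin_two [DecidableEq α] (x y : α → Fin 2) :
    #{π : Perm α | x ∘ π = y} =
      if hammingNorm x = hammingNorm y then
        (Fintype.card α - hammingNorm x)! * (hammingNorm x)!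
      else 0 := by
  simp only [card_perm_comp_eq, Fin.forall_fin_two, Fin.prod_univ_two,
    card_fiber_zero_eq_card_sub_hammingNorm, card_fiber_one_eq_hammingNorm]
  exact if_congr ⟨And.right, fun h => ⟨by rw [h], h⟩⟩ rfl rfl

end FinTwo

theorem sum_permOp_apply (x y : Fin 3 → Fin 2) :
    (∑ π, permOp π) x y =
      if hammingNorm x = hammingNorm y then ((3 - hammingNorm x)! * (hammingNorm x)! : ℂ) else 0 := by
  have hcount := card_perm_comp_eq_fin_two x y
  rw [Fintype.card_fin] at hcount
  simp only [Matrix.sum_apply, permOp, ← funext_iff, sum_boole]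
  exact_mod_cast hcount

theorem tens3_smul (c : ℂ) (ρ : Matrix (Fin 2) (Fin 2) ℂ) : tens3 (c • ρ) = c ^ 3 • tens3 ρ := by
  ext x y
  simp [tens3, prod_mul_distrib]

theorem tens3_vecMulVec_apply (u v : Fin 2 → ℂ) (x y : Fin 3 → Fin 2) :
    tens3 (vecMulVec u v) x y =
      u 0 ^ (3 - hammingNorm x) * u 1 ^ hammingNorm x *
        (v 0 ^ (3 - hammingNorm y) * v 1 ^ hammingNorm y) := by
  simp only [tens3, vecMulVec_apply, prod_mul_distrib, prod_comp_fin_two_eq_pow_hammingNorm (fun a => u a),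
    prod_comp_fin_two_eq_pow_hammingNorm (fun b => v b), Fintype.card_fin]

def sixStateKets : Fin 6 → Fin 2 → ℂ := ![![1, 0], ![0, 1], ![1, 1], ![1, -1], ![1, Complex.I], ![1, -Complex.I]]

theorem qstate_eq_smul_vecMulVec (k : Fin 6) :
    qstate k = (star (sixStateKets k) ⬝ᵥ sixStateKets k)⁻¹ •
      vecMulVec (sixStateKets k) (star (sixStateKets k)) := by
  fin_cases k <;> ext i j <;> fin_cases i <;> fin_cases j <;>
    norm_num [qstate, sixStateKets, dotProduct, vecMulVec, div_eq_inv_mul]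

theorem sum_tens3_qstate_apply (x y : Fin 3 → Fin 2) :
    (∑ k, tens3 (qstate k)) x y =
      ∑ k, (star (sixStateKets k) ⬝ᵥ sixStateKets k)⁻¹ ^ 3 *
        (sixStateKets k 0 ^ (3 - hammingNorm x) * sixStateKets k 1 ^ hammingNorm x *
          (star (sixStateKets k 0) ^ (3 - hammingNorm y) *
            star (sixStateKets k 1) ^ hammingNorm y)) := by
  simp only [Matrix.sum_apply, qstate_eq_smul_vecMulVec, tens3_smul, Matrix.smul_apply, tens3_vecMulVec_apply,
    Pi.star_apply, smul_eq_mul]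

/-- The six single-qubit states form a quantum state 3-design:
`(1/6)·∑_{ρ ∈ Q̃} ρ⊗ρ⊗ρ = (1/4)·P_sym3`, where `P_sym3 = (1/6)·∑_{π ∈ S₃} U_π` is the
orthogonal projector onto the symmetric subspace of `(ℂ²)^{⊗3}`. -/
theorem six_states_three_design :
    ((1 : ℂ)/6) • ∑ k : Fin 6, tens3 (qstate k) =
      ((1 : ℂ)/4) • (((1 : ℂ)/6) • ∑ π : Equiv.Perm (Fin 3), permOp π) := by
  ext x y
  have hx : hammingNorm x ≤ 3 := hammingNorm_le_card_fintype.trans_eq (Fintype.card_fin 3)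
  have hy : hammingNorm y ≤ 3 := hammingNorm_le_card_fintype.trans_eq (Fintype.card_fin 3)
  simp only [Matrix.smul_apply, smul_eq_mul]
  rw [sum_tens3_qstate_apply, sum_permOp_apply, Fin.sum_univ_six]
  simp only [sixStateKets, dotProduct, Fin.sum_univ_two, Pi.star_apply, Matrix.cons_val]
  interval_cases hammingNorm x <;> interval_cases hammingNorm y <;> norm_num [Nat.factorial, pow_succ]
end

section
/- (Soundness of qtickets) For each i ∈ {1,...,N} let M_i be a CPTP map on 2×2 complex matrices, and set F_i = (1/6)·∑_{ρ ∈ Q̃} Tr[ρ·M_i(ρ)] (the average fidelity of M_i) and F_exp = (1/N)·∑_{i=1}^N F_i. Let M = ⊗_{i=1}^N M_i act componentwise on N-qubit product states, and let 0 ≤ F_tol ≤ F_exp ≤ 1. Then the average acceptance probability satisfies 6^{−N} · ∑_{ρ ∈ Q̃^N} Tr[P_acc^ρ · M(ρ)] ≥ 1 − exp(−N·D(F_tol‖F_exp)), where for ρ = (ρ_1,...,ρ_N) ∈ Q̃^N the state fed to M is the tensor product ⊗_i ρ_i. -/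
open Matrix

/-- Tensor product `⊗_{i<N} A_i` of a family of 2×2 matrices, as a matrix indexed by
functions `Fin N → Fin 2`. -/
noncomputable def tensFam {N : ℕ} (A : Fin N → Matrix (Fin 2) (Fin 2) ℂ) :
    Matrix (Fin N → Fin 2) (Fin N → Fin 2) ℂ :=
  fun x y => ∏ i, A i (x i) (y i)

/-- The acceptance projector `P_acc^ρ` for an `N`-qubit pure product state
`ρ = ⊗_i ρ_i` and tolerance `F_tol`: the sum over boolean strings `b` with
`∑ b_i ≥ F_tol·N` of `⊗_i (b_i·ρ_i + (1−b_i)·(1−ρ_i))`. -/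
noncomputable def Pacc {N : ℕ} (Ftol : ℝ) (ρ : Fin N → Matrix (Fin 2) (Fin 2) ℂ) :
    Matrix (Fin N → Fin 2) (Fin N → Fin 2) ℂ :=
  ∑ b : Fin N → Bool,
    if Ftol * N ≤ ∑ i, (if b i then (1 : ℝ) else 0) then
      tensFam (fun i => if b i then ρ i else 1 - ρ i)
    else 0

/-- The CPTP map with Kraus operators `K j`, acting as `X ↦ ∑_j K_j X K_j†`. -/
noncomputable def krausApply {n m κ : Type*} [Fintype n] [Fintype κ]
    (K : κ → Matrix m n ℂ) (X : Matrix n n ℂ) : Matrix m m ℂ :=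
  ∑ j, K j * X * (K j)ᴴ

/-- The average fidelity of a single-qubit channel, computed (via the 2-design
property) as the average over the six states. -/
noncomputable def avgFid {κ : Type*} [Fintype κ]
    (K : κ → Matrix (Fin 2) (Fin 2) ℂ) : ℝ :=
  (1/6 : ℝ) * ∑ s : Fin 6, (Matrix.trace (qstate s * krausApply K (qstate s))).re

/-!
Expanding `P_acc` and using that the trace is multiplicative on tensor products, the acceptance
probability for fixed input states is a sum over outcome strings `b` of products of single-qubit
test probabilities `Tr[ρᵢ Mᵢ(ρᵢ)]` (for `bᵢ = 1`) and `Tr[(1 - ρᵢ) Mᵢ(ρᵢ)]` (for `bᵢ = 0`), which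
are nonnegative because the `ρᵢ` are projectors. Averaging over the six states qubit by qubit
turns these factors into `Fᵢ` and `1 - Fᵢ`, so the average acceptance probability is exactly the
probability that independent Bernoulli(`Fᵢ`) coins show at least `F_tol·N` successes. The Chernoff
bound, with AM-GM replacing `∏ᵢ (Fᵢ e^{-t} + 1 - Fᵢ)` by its value at the mean `F_exp` and the
optimal `t`, bounds the complementary lower tail by `exp(-N·D(F_tol‖F_exp))`.
-/

open Finset Real Matrix
open scoped ComplexOrder MatrixOrder

section Chernoff

variable {ι : Type*} [Fintype ι]

def numTrue (b : ι → Bool) : ℝ := ∑ i, if b i then 1 else 0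

def bernoulliProb (p : ι → ℝ) (b : ι → Bool) : ℝ := ∏ i, if b i then p i else 1 - p i

lemma numTrue_nonneg (b : ι → Bool) : 0 ≤ numTrue b :=
  sum_nonneg fun i _ => by split <;> norm_num

lemma bernoulliProb_nonneg {p : ι → ℝ} (hp0 : ∀ i, 0 ≤ p i) (hp1 : ∀ i, p i ≤ 1)
    (b : ι → Bool) : 0 ≤ bernoulliProb p b :=
  prod_nonneg fun i _ => by split <;> linarith [hp0 i, hp1 i]

lemma sum_prod_ite_bool [DecidableEq ι] {R : Type*} [CommSemiring R] (x y : ι → R) :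
    ∑ b : ι → Bool, ∏ i, (if b i then x i else y i) = ∏ i, (x i + y i) := by
  rw [← Fintype.prod_sum fun i (β : Bool) => if β then x i else y i]
  simp only [Fintype.sum_bool, if_true, Bool.false_eq_true, if_false]

lemma sum_bernoulliProb [DecidableEq ι] (p : ι → ℝ) : ∑ b, bernoulliProb p b = 1 := by
  simp [bernoulliProb, sum_prod_ite_bool]

lemma sum_bernoulliProb_mul_exp [DecidableEq ι] (p : ι → ℝ) (s : ℝ) :
    ∑ b, bernoulliProb p b * exp (s * numTrue b) = ∏ i, (p i * exp s + (1 - p i)) := by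
  rw [← sum_prod_ite_bool]
  refine sum_congr rfl fun b _ => ?_
  rw [bernoulliProb, numTrue, mul_sum, exp_sum, ← prod_mul_distrib]
  refine prod_congr rfl fun i _ => ?_
  split <;> simp

lemma prod_le_pow_of_sum_eq {z : ι → ℝ} {μ : ℝ} (hz : ∀ i, 0 ≤ z i)
    (hμ : ∑ i, z i = Fintype.card ι * μ) : ∏ i, z i ≤ μ ^ Fintype.card ι := by
  rcases Nat.eq_zero_or_pos (Fintype.card ι) with h0 | hpos
  · simp [Fintype.card_eq_zero_iff.mp h0]
  have hn : (0 : ℝ) < Fintype.card ι := by exact_mod_cast hpos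
  have amgm := geom_mean_le_arith_mean univ (fun _ => 1) z (fun _ _ => zero_le_one)
    (by simpa using hn) (fun i _ => hz i)
  simp only [rpow_one, sum_const, card_univ, nsmul_eq_mul, mul_one, one_mul, hμ] at amgm
  rw [mul_div_cancel_left₀ _ hn.ne'] at amgm
  calc ∏ i, z i = ((∏ i, z i) ^ ((Fintype.card ι : ℝ)⁻¹)) ^ Fintype.card ι := by
        rw [← rpow_natCast, ← rpow_mul (prod_nonneg fun i _ => hz i), inv_mul_cancel₀ hn.ne',
          rpow_one]
    _ ≤ μ ^ Fintype.card ι :=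
        pow_le_pow_left₀ (rpow_nonneg (prod_nonneg fun i _ => hz i) _) amgm _

lemma sum_numTrue_lt_le_exp_mul_prod [DecidableEq ι] {p : ι → ℝ} (hp0 : ∀ i, 0 ≤ p i)
    (hp1 : ∀ i, p i ≤ 1) (a : ℝ) {t : ℝ} (ht : 0 ≤ t) :
    ∑ b with numTrue b < a * Fintype.card ι, bernoulliProb p b ≤
      exp (t * (a * Fintype.card ι)) * ∏ i, (p i * exp (-t) + (1 - p i)) := by
  rw [← sum_bernoulliProb_mul_exp, mul_sum]
  calc ∑ b with numTrue b < a * Fintype.card ι, bernoulliProb p b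
      ≤ ∑ b with numTrue b < a * Fintype.card ι,
          exp (t * (a * Fintype.card ι)) * (bernoulliProb p b * exp (-t * numTrue b)) := by
        refine sum_le_sum fun b hb => ?_
        rw [mul_left_comm, ← exp_add]
        refine le_mul_of_one_le_right (bernoulliProb_nonneg hp0 hp1 b) (one_le_exp ?_)
        nlinarith [(mem_filter.mp hb).2]
    _ ≤ _ := sum_le_sum_of_subset_of_nonneg (filter_subset _ _) fun b _ _ =>
        mul_nonneg (exp_nonneg _) (mul_nonneg (bernoulliProb_nonneg hp0 hp1 b) (exp_nonneg _))

/-- At the optimal parameter `t = log (m (1 - a) / (a (1 - m)))`, the exponential-moment bound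
`exp (t a) * E[exp (-t X)]` for `X ~ Bernoulli m` equals `exp (-D(a‖m))`. -/
lemma exists_exp_mul_moment_eq_exp_neg_binRelEnt {a m : ℝ} (ha0 : 0 < a) (ham : a ≤ m)
    (hm1 : m < 1) :
    ∃ t ≥ 0, exp (t * a) * (m * exp (-t) + (1 - m)) = exp (-binRelEnt a m) := by
  have hm0 : 0 < m := ha0.trans_le ham
  have ha1 : 0 < 1 - a := by linarith
  have hm1' : 0 < 1 - m := by linarith
  refine ⟨log (m * (1 - a) / (a * (1 - m))), log_nonneg ?_, ?_⟩
  · rw [le_div_iff₀ (by positivity)]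
    nlinarith
  have hmoment :
      m * exp (-log (m * (1 - a) / (a * (1 - m)))) + (1 - m) = (1 - m) / (1 - a) := by
    rw [exp_neg, exp_log (by positivity)]
    field_simp
    ring
  rw [hmoment, ← exp_log (show 0 < (1 - m) / (1 - a) by positivity), ← exp_add]
  congr 1
  simp only [binRelEnt, log_div, log_mul, ha0.ne', hm0.ne', ha1.ne', hm1'.ne', ne_eq,
    mul_eq_zero, or_self, not_false_eq_true]
  ring

theorem sum_numTrue_lt_le_exp_neg_binRelEnt [DecidableEq ι] {p : ι → ℝ} (hp0 : ∀ i, 0 ≤ p i)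
    (hp1 : ∀ i, p i ≤ 1) {a m : ℝ} (ha0 : 0 ≤ a) (ham : a ≤ m) (hm1 : m ≤ 1)
    (hm : ∑ i, p i = Fintype.card ι * m) :
    ∑ b with numTrue b < a * Fintype.card ι, bernoulliProb p b ≤
      exp (-Fintype.card ι * binRelEnt a m) := by
  rcases ha0.eq_or_lt with rfl | ha0
  · simp [(numTrue_nonneg _).not_gt, exp_nonneg]
  rcases hm1.eq_or_lt with rfl | hm1
  · -- `D(a‖1) = a log a`: the second term vanishes through `x / 0 = 0` and `log 0 = 0`.
    have hD : binRelEnt a 1 ≤ 0 := by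
      simpa [binRelEnt] using mul_nonpos_of_nonneg_of_nonpos ha0.le (log_nonpos ha0.le ham)
    calc ∑ b with numTrue b < a * Fintype.card ι, bernoulliProb p b
        ≤ ∑ b, bernoulliProb p b := sum_le_sum_of_subset_of_nonneg (filter_subset _ _)
          fun b _ _ => bernoulliProb_nonneg hp0 hp1 b
      _ = 1 := sum_bernoulliProb p
      _ ≤ _ := one_le_exp (by nlinarith)
  obtain ⟨t, ht, hexp⟩ := exists_exp_mul_moment_eq_exp_neg_binRelEnt ha0 ham hm1
  have hmean : ∑ i, (p i * exp (-t) + (1 - p i)) =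
      Fintype.card ι * (m * exp (-t) + (1 - m)) := by
    simp only [sum_add_distrib, sum_sub_distrib, ← sum_mul, hm, sum_const, card_univ,
      nsmul_eq_mul, mul_one]
    ring
  calc ∑ b with numTrue b < a * Fintype.card ι, bernoulliProb p b
      ≤ exp (t * (a * Fintype.card ι)) * ∏ i, (p i * exp (-t) + (1 - p i)) :=
        sum_numTrue_lt_le_exp_mul_prod hp0 hp1 a ht
    _ ≤ exp (t * (a * Fintype.card ι)) * (m * exp (-t) + (1 - m)) ^ Fintype.card ι :=
        mul_le_mul_of_nonneg_left (prod_le_pow_of_sum_eq (fun i => by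
          nlinarith [hp0 i, hp1 i, exp_nonneg (-t), mul_nonneg (hp0 i) (exp_nonneg (-t))]) hmean)
          (exp_nonneg _)
    _ = (exp (t * a) * (m * exp (-t) + (1 - m))) ^ Fintype.card ι := by
        rw [mul_pow, ← exp_nat_mul]
        ring_nf
    _ = exp (-Fintype.card ι * binRelEnt a m) := by
        rw [hexp, ← exp_nat_mul]
        ring_nf

theorem one_sub_exp_neg_binRelEnt_le_sum_le_numTrue [DecidableEq ι] {p : ι → ℝ}
    (hp0 : ∀ i, 0 ≤ p i) (hp1 : ∀ i, p i ≤ 1) {a m : ℝ} (ha0 : 0 ≤ a) (ham : a ≤ m)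
    (hm1 : m ≤ 1) (hm : ∑ i, p i = Fintype.card ι * m) :
    1 - exp (-Fintype.card ι * binRelEnt a m) ≤
      ∑ b with a * Fintype.card ι ≤ numTrue b, bernoulliProb p b := by
  have htotal := sum_filter_add_sum_filter_not univ (fun b => a * Fintype.card ι ≤ numTrue b)
    (bernoulliProb p)
  simp only [not_le, sum_bernoulliProb] at htotal
  linarith [sum_numTrue_lt_le_exp_neg_binRelEnt hp0 hp1 ha0 ham hm1 hm]

end Chernoff

lemma Matrix.PosSemidef.krausApply {n m κ : Type*} [Fintype n] [Fintype m] [Fintype κ]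
    (K : κ → Matrix m n ℂ) {X : Matrix n n ℂ} (hX : X.PosSemidef) :
    (krausApply K X).PosSemidef :=
  posSemidef_sum _ fun j _ => hX.mul_mul_conjTranspose_same (K j)

lemma trace_krausApply {n κ : Type*} [Fintype n] [DecidableEq n] [Fintype κ]
    {K : κ → Matrix n n ℂ} (hK : ∑ j, (K j)ᴴ * K j = 1) (X : Matrix n n ℂ) :
    (krausApply K X).trace = X.trace := by
  simp_rw [krausApply, trace_sum, trace_mul_cycle (K _) X]
  rw [← trace_sum, ← sum_mul, hK, one_mul]

lemma IsStarProjection.trace_mul_nonneg {n 𝕜 : Type*} [Fintype n] [RCLike 𝕜]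
    {P X : Matrix n n 𝕜} (hP : IsStarProjection P) (hX : X.PosSemidef) :
    0 ≤ (P * X).trace := by
  have hPXP : (P * X).trace = (P * X * Pᴴ).trace := by
    rw [← star_eq_conjTranspose, hP.isSelfAdjoint.star_eq, trace_mul_cycle,
      hP.isIdempotentElem.eq]
  exact hPXP ▸ (hX.mul_mul_conjTranspose_same P).trace_nonneg

lemma isStarProjection_qstate (s : Fin 6) : IsStarProjection (qstate s) := by
  constructor
  · fin_cases s <;> ext i j <;> fin_cases i <;> fin_cases j <;>
      simp [qstate, Matrix.mul_apply, Fin.sum_univ_two, Complex.ext_iff] <;> norm_num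
  · fin_cases s <;> ext i j <;> fin_cases i <;> fin_cases j <;> simp [qstate]

lemma trace_qstate (s : Fin 6) : (qstate s).trace = 1 := by
  fin_cases s <;> simp [qstate, trace_fin_two] <;> norm_num

/-- The two outcomes of the test of a qubit prepared in `qstate s`: `true` projects onto the
prepared state, `false` onto its orthogonal complement. -/
noncomputable def testProj (s : Fin 6) (β : Bool) : Matrix (Fin 2) (Fin 2) ℂ :=
  if β then qstate s else 1 - qstate s

noncomputable def testProb {κ : Type*} [Fintype κ] (K : κ → Matrix (Fin 2) (Fin 2) ℂ)
    (s : Fin 6) (β : Bool) : ℝ :=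
  (testProj s β * krausApply K (qstate s)).trace.re

section Test

variable {κ : Type*} [Fintype κ] (K : κ → Matrix (Fin 2) (Fin 2) ℂ)

lemma isStarProjection_testProj (s : Fin 6) (β : Bool) : IsStarProjection (testProj s β) := by
  cases β
  · exact (isStarProjection_qstate s).one_sub
  · exact isStarProjection_qstate s

lemma trace_testProj_mul_krausApply_nonneg (s : Fin 6) (β : Bool) :
    0 ≤ (testProj s β * krausApply K (qstate s)).trace :=
  (isStarProjection_testProj s β).trace_mul_nonneg
    ((nonneg_iff_posSemidef.mp (isStarProjection_qstate s).nonneg).krausApply K)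

lemma ofReal_testProb (s : Fin 6) (β : Bool) :
    (testProb K s β : ℂ) = (testProj s β * krausApply K (qstate s)).trace :=
  (Complex.eq_re_of_ofReal_le
    (Complex.ofReal_zero ▸ trace_testProj_mul_krausApply_nonneg K s β)).symm

lemma testProb_nonneg (s : Fin 6) (β : Bool) : 0 ≤ testProb K s β :=
  (Complex.nonneg_iff.mp (trace_testProj_mul_krausApply_nonneg K s β)).1

lemma testProb_true_add_testProb_false {K : κ → Matrix (Fin 2) (Fin 2) ℂ}
    (hK : ∑ j, (K j)ᴴ * K j = 1) (s : Fin 6) : testProb K s true + testProb K s false = 1 := by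
  have h := congrArg Complex.re (trace_krausApply hK (qstate s))
  rwa [trace_qstate, Complex.one_re, ← one_mul (krausApply K _), ← add_sub_cancel (qstate s) 1,
    add_mul, trace_add, Complex.add_re] at h

lemma sum_testProb_true : ∑ s, testProb K s true = 6 * avgFid K := by
  simp [testProb, testProj, avgFid]

lemma sum_testProb_false {K : κ → Matrix (Fin 2) (Fin 2) ℂ} (hK : ∑ j, (K j)ᴴ * K j = 1) :
    ∑ s, testProb K s false = 6 * (1 - avgFid K) := by
  have h := sum_congr rfl fun s (_ : s ∈ univ) => testProb_true_add_testProb_false hK s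
  rw [sum_add_distrib, sum_testProb_true] at h
  simp only [sum_const, card_univ, Fintype.card_fin, nsmul_eq_mul, Nat.cast_ofNat, mul_one] at h
  linarith

lemma avgFid_nonneg : 0 ≤ avgFid K := by
  have := sum_nonneg fun s (_ : s ∈ univ) => testProb_nonneg K s true
  rw [sum_testProb_true] at this
  linarith

lemma avgFid_le_one {K : κ → Matrix (Fin 2) (Fin 2) ℂ} (hK : ∑ j, (K j)ᴴ * K j = 1) :
    avgFid K ≤ 1 := by
  have := sum_nonneg fun s (_ : s ∈ univ) => testProb_nonneg K s false
  rw [sum_testProb_false hK] at this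
  linarith

end Test

section Tensor

variable {N : ℕ}

lemma trace_tensFam_mul (A B : Fin N → Matrix (Fin 2) (Fin 2) ℂ) :
    (tensFam A * tensFam B).trace = ∏ i, (A i * B i).trace := by
  simp only [trace, Matrix.diag, mul_apply, tensFam, ← prod_mul_distrib]
  simp only [Fintype.prod_sum]

lemma trace_Pacc_mul_tensFam (Ftol : ℝ) (ρ C : Fin N → Matrix (Fin 2) (Fin 2) ℂ) :
    (Pacc Ftol ρ * tensFam C).trace =
      ∑ b with Ftol * N ≤ numTrue b, ∏ i, ((if b i then ρ i else 1 - ρ i) * C i).trace := by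
  rw [Pacc, sum_mul, trace_sum, sum_filter]
  refine sum_congr rfl fun b _ => ?_
  unfold numTrue
  split_ifs <;> simp [trace_tensFam_mul]

variable {κ : Type*} [Fintype κ] (K : Fin N → κ → Matrix (Fin 2) (Fin 2) ℂ) (Ftol : ℝ)

lemma re_trace_Pacc_mul_tensFam_krausApply (f : Fin N → Fin 6) :
    (Pacc Ftol (fun i => qstate (f i)) *
        tensFam (fun i => krausApply (K i) (qstate (f i)))).trace.re =
      ∑ b with Ftol * N ≤ numTrue b, ∏ i, testProb (K i) (f i) (b i) := by
  have htest : ∀ (b : Fin N → Bool) i,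
      ((if b i then qstate (f i) else 1 - qstate (f i)) * krausApply (K i) (qstate (f i))).trace =
        testProb (K i) (f i) (b i) := fun b i => (ofReal_testProb _ _ _).symm
  simp only [trace_Pacc_mul_tensFam, htest, ← Complex.ofReal_prod, ← Complex.ofReal_sum,
    Complex.ofReal_re]

lemma average_re_trace_Pacc_mul_tensFam_krausApply {K : Fin N → κ → Matrix (Fin 2) (Fin 2) ℂ}
    (hK : ∀ i, ∑ j, (K i j)ᴴ * K i j = 1) :
    1 / 6 ^ N * ∑ f : Fin N → Fin 6, (Pacc Ftol (fun i => qstate (f i)) *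
        tensFam (fun i => krausApply (K i) (qstate (f i)))).trace.re =
      ∑ b with Ftol * N ≤ numTrue b, bernoulliProb (fun i => avgFid (K i)) b := by
  simp only [re_trace_Pacc_mul_tensFam_krausApply]
  rw [sum_comm, mul_sum]
  refine sum_congr rfl fun b _ => ?_
  rw [← Fintype.prod_sum fun i s => testProb (K i) s (b i), bernoulliProb,
    show (1 / 6 ^ N : ℝ) = ∏ _i : Fin N, 1 / 6 by simp, ← prod_mul_distrib]
  refine prod_congr rfl fun i _ => ?_
  cases b i
  · simp [sum_testProb_false (hK i)]
  · simp [sum_testProb_true]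

end Tensor

/-- Soundness of qtickets: if the per-qubit average fidelity `F_exp` exceeds the
tolerance `F_tol`, an honest holder redeems a qticket except with probability at
most `exp(−N·D(F_tol‖F_exp))`. -/
theorem qticket_soundness (N : ℕ) (hN : 0 < N) (κ : Type) [Fintype κ]
    (K : Fin N → κ → Matrix (Fin 2) (Fin 2) ℂ)
    (hK : ∀ i, ∑ j, (K i j)ᴴ * K i j = 1)
    (Ftol : ℝ) (hF0 : 0 ≤ Ftol)
    (hFtol : Ftol ≤ (∑ i, avgFid (K i)) / N)
    (hFexp : (∑ i, avgFid (K i)) / N ≤ 1) :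
    1 - Real.exp (-(N : ℝ) * binRelEnt Ftol ((∑ i, avgFid (K i)) / N)) ≤
      (1 / (6 : ℝ) ^ N) * ∑ f : Fin N → Fin 6,
        (Matrix.trace (Pacc Ftol (fun i => qstate (f i)) *
          tensFam (fun i => krausApply (K i) (qstate (f i))))).re := by
  have hmean : ∑ i, avgFid (K i) = Fintype.card (Fin N) * ((∑ i, avgFid (K i)) / N) := by
    rw [Fintype.card_fin, mul_div_cancel₀ _ (by exact_mod_cast hN.ne')]
  have hchernoff := one_sub_exp_neg_binRelEnt_le_sum_le_numTrue (fun i => avgFid_nonneg (K i))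
    (fun i => avgFid_le_one (hK i)) hF0 hFtol hFexp hmean
  rw [Fintype.card_fin] at hchernoff
  rwa [average_re_trace_Pacc_mul_tensFam_krausApply Ftol hK]
end

section
/- (Selective value of a game) Let G = (ϱ, σ) be a weighted quantum retrieval game with finite nonempty answer set A, whose reduced density matrix ρ = ∑_s ϱ(s) is positive definite. Define O(a) = ∑_{s∈S} σ(s,a) · ρ^{−1/2} ϱ(s) ρ^{−1/2}. Then the selective value of G equals Sel(G) = max_{a∈A} ‖O(a)‖, where ‖·‖ denotes the operator norm, and moreover this supremum is attained by some selective projection. -/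
open Matrix
open scoped ComplexOrder
namespace QRG

variable {n S A : Type*}

/-- The normalization `∑_{s,a} Tr[P(a)ϱ(s)]` of the distribution induced by an
indexed ensemble `ϱ` and a selective projection `P`. -/
noncomputable def normZ [Fintype n] [Fintype S] [Fintype A]
    (ϱ : S → Matrix n n ℂ) (P : A → Matrix n n ℂ) : ℝ :=
  ∑ s, ∑ a, (Matrix.trace (P a * ϱ s)).re

/-- The induced probability distribution `⟨ϱ, P⟩(s,a) = Tr[P(a)ϱ(s)] / normZ`. -/
noncomputable def induced [Fintype n] [Fintype S] [Fintype A]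
    (ϱ : S → Matrix n n ℂ) (P : A → Matrix n n ℂ) (s : S) (a : A) : ℝ :=
  (Matrix.trace (P a * ϱ s)).re / normZ ϱ P

/-- The value `Val(G,P) = ∑_{s,a} p(s,a)·σ(s,a)` of the game `G = (ϱ,σ)` with
respect to the projection `P`. -/
noncomputable def val [Fintype n] [Fintype S] [Fintype A]
    (ϱ : S → Matrix n n ℂ) (σ : S → A → ℝ) (P : A → Matrix n n ℂ) : ℝ :=
  ∑ s, ∑ a, induced ϱ P s a * σ s a

/-- The selective value `Sel(G)`: the supremum of `Val(G,P)` over all selective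
projections `P` (families of positive semidefinite matrices) with positive
normalization. -/
noncomputable def sel [Fintype n] [Fintype S] [Fintype A]
    (ϱ : S → Matrix n n ℂ) (σ : S → A → ℝ) : ℝ :=
  sSup {v | ∃ P : A → Matrix n n ℂ,
    (∀ a, (P a).PosSemidef) ∧ 0 < normZ ϱ P ∧ v = val ϱ σ P}

/-- The physical value `Phys(G)`: the supremum of `Val(G,P)` over all physical
projections `P` (selective projections with `∑_a P(a) = 1`). -/
noncomputable def phys [Fintype n] [DecidableEq n] [Fintype S] [Fintype A]
    (ϱ : S → Matrix n n ℂ) (σ : S → A → ℝ) : ℝ :=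
  sSup {v | ∃ P : A → Matrix n n ℂ,
    (∀ a, (P a).PosSemidef) ∧ (∑ a, P a) = 1 ∧ v = val ϱ σ P}

end QRG

open QRG

/-- The square root of a positive semidefinite matrix, as defined in Mathlib (December 2024),
where it has since been removed. -/
noncomputable def Matrix.PosSemidef.sqrt {n 𝕜 : Type*} [Fintype n] [DecidableEq n] [RCLike 𝕜]
    {A : Matrix n n 𝕜} (hA : A.PosSemidef) : Matrix n n 𝕜 :=
  hA.isHermitian.eigenvectorUnitary.1 * diagonal ((↑) ∘ (√·) ∘ hA.isHermitian.eigenvalues) *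
  (star hA.isHermitian.eigenvectorUnitary : Matrix n n 𝕜)

/-- The `ℓ²` operator norm of a square complex matrix. -/
noncomputable def opNorm {n : Type*} [Fintype n] [DecidableEq n] (M : Matrix n n ℂ) : ℝ :=
  ‖Matrix.toEuclideanCLM (𝕜 := ℂ) M‖

/-!
Conjugating by `R = ρ^{1/2}` turns a selective projection `P` into the positive family
`T(a) = R P(a) R`, for which `normZ = ∑ₐ Tr T(a)` and `Val = ∑ₐ Tr[T(a) O(a)] / ∑ₐ Tr T(a)`.
Since `O(a) ≤ ‖O(a)‖ · 1` in the Loewner order, `Tr[T(a) O(a)] ≤ ‖O(a)‖ Tr T(a)`, whence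
`Val ≤ maxₐ ‖O(a)‖`. Equality is attained by the `T` supported on a maximizing answer `a₀`, where it
is the projector onto an eigenvector of `O(a₀)` for its top eigenvalue, which equals `‖O(a₀)‖`.
-/

namespace Matrix

variable {n 𝕜 : Type*} [Fintype n] [DecidableEq n] [RCLike 𝕜]

open scoped Norms.L2Operator MatrixOrder

lemma PosSemidef.sqrt_eq_cfcSqrt {A : Matrix n n 𝕜} (hA : A.PosSemidef) :
    hA.sqrt = CFC.sqrt A := by
  rw [CFC.sqrt_eq_real_sqrt A hA.nonneg, cfcₙ_eq_cfc, hA.isHermitian.cfc_eq]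
  rfl

lemma PosSemidef.sqrt_mul_self {A : Matrix n n 𝕜} (hA : A.PosSemidef) : hA.sqrt * hA.sqrt = A := by
  rw [hA.sqrt_eq_cfcSqrt]
  exact CFC.sqrt_mul_sqrt_self A hA.nonneg

lemma PosSemidef.posSemidef_sqrt {A : Matrix n n 𝕜} (hA : A.PosSemidef) : hA.sqrt.PosSemidef := by
  rw [hA.sqrt_eq_cfcSqrt]
  exact (CFC.sqrt_nonneg A).posSemidef

lemma PosDef.isUnit_sqrt {A : Matrix n n 𝕜} (hA : A.PosDef) : IsUnit hA.posSemidef.sqrt := by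
  rw [hA.posSemidef.sqrt_eq_cfcSqrt]
  exact (CFC.isUnit_sqrt_iff A hA.posSemidef.nonneg).mpr hA.isUnit

lemma PosSemidef.trace_mul_nonneg {Q M : Matrix n n 𝕜} (hQ : Q.PosSemidef) (hM : M.PosSemidef) :
    0 ≤ (Q * M).trace := by
  obtain ⟨B, rfl⟩ := CStarAlgebra.nonneg_iff_eq_star_mul_self.mp hQ.nonneg
  rw [Matrix.mul_assoc, trace_mul_comm, Matrix.mul_assoc, star_eq_conjTranspose, ← Matrix.mul_assoc]
  exact (hM.mul_mul_conjTranspose_same B).trace_nonneg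

lemma opNorm_eq_norm (M : Matrix n n ℂ) : opNorm M = ‖M‖ := rfl

lemma PosSemidef.trace_mul_le_norm_mul_trace {Q M : Matrix n n ℂ} (hQ : Q.PosSemidef)
    (hM : M.IsHermitian) : (Q * M).trace ≤ ‖M‖ * Q.trace := by
  have hgap : (algebraMap ℝ (Matrix n n ℂ) ‖M‖ - M).PosSemidef :=
    le_iff.mp (IsSelfAdjoint.le_algebraMap_norm_self hM.isSelfAdjoint)
  have := hQ.trace_mul_nonneg hgap
  rwa [Matrix.mul_sub, trace_sub, Algebra.algebraMap_eq_smul_one, Matrix.mul_smul, Matrix.mul_one,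
    trace_smul, sub_nonneg, Complex.real_smul] at this

lemma PosSemidef.exists_trace_eq_one_trace_mul_eq_norm [Nonempty n] {M : Matrix n n ℂ}
    (hM : M.PosSemidef) : ∃ Q : Matrix n n ℂ, Q.PosSemidef ∧ Q.trace = 1 ∧ (Q * M).trace = ‖M‖ := by
  obtain ⟨i, hi⟩ : ‖M‖ ∈ Set.range hM.isHermitian.eigenvalues := by
    rw [← hM.isHermitian.spectrum_real_eq_range_eigenvalues]
    exact CStarAlgebra.norm_mem_spectrum_of_nonneg hM.nonneg
  set v := hM.isHermitian.eigenvectorBasis i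
  have hv : ⇑v ⬝ᵥ star ⇑v = 1 :=
    inner_self_eq_one_of_norm_eq_one (hM.isHermitian.eigenvectorBasis.orthonormal.1 i)
  refine ⟨vecMulVec v (star v), posSemidef_vecMulVec_self_star _, ?_, ?_⟩
  · rw [trace_vecMulVec, hv]
  · rw [trace_mul_comm, mul_vecMulVec, trace_vecMulVec, hM.isHermitian.mulVec_eigenvectorBasis, hi,
      smul_dotProduct, hv]
    simp

lemma conj_inv_conj_cancel {R : Matrix n n ℂ} (hR : IsUnit R) (X : Matrix n n ℂ) :
    R * (R⁻¹ * X * R⁻¹) * R = X := by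
  have hdet := (isUnit_iff_isUnit_det R).mp hR
  rw [← Matrix.mul_assoc, ← Matrix.mul_assoc, mul_nonsing_inv _ hdet, Matrix.one_mul,
    Matrix.mul_assoc, nonsing_inv_mul _ hdet, Matrix.mul_one]

lemma trace_mul_eq_trace_conj_mul_conj_inv {R : Matrix n n ℂ} (hR : IsUnit R) (P M : Matrix n n ℂ) :
    (P * M).trace = (R * P * R * (R⁻¹ * M * R⁻¹)).trace := by
  have hdet := (isUnit_iff_isUnit_det R).mp hR
  have hconj : R * P * R * (R⁻¹ * M * R⁻¹) = R * (P * M) * R⁻¹ := by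
    simp only [Matrix.mul_assoc]
    rw [← Matrix.mul_assoc R R⁻¹, mul_nonsing_inv _ hdet, Matrix.one_mul]
  rw [hconj, trace_mul_cycle, nonsing_inv_mul _ hdet, Matrix.one_mul]

end Matrix

namespace QRG

open Matrix

variable {n S A : Type*} [Fintype n] [Fintype S]

/-- The matrix `O(a)` of the paper, with `R` standing for `ρ^{1/2}`. -/
noncomputable def observable [DecidableEq n] (ϱ : S → Matrix n n ℂ) (σ : S → A → ℝ)
    (R : Matrix n n ℂ) (a : A) : Matrix n n ℂ :=
  ∑ s, σ s a • (R⁻¹ * ϱ s * R⁻¹)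

variable {ϱ : S → Matrix n n ℂ} {σ : S → A → ℝ} {R : Matrix n n ℂ}

lemma normZ_eq_sum_re_trace_conj [Fintype A] (hRR : R * R = ∑ s, ϱ s) (P : A → Matrix n n ℂ) :
    normZ ϱ P = ∑ a, (R * P a * R).trace.re := by
  rw [normZ, Finset.sum_comm]
  refine Finset.sum_congr rfl fun a _ => ?_
  rw [← Complex.re_sum, ← trace_sum, ← Matrix.mul_sum, ← hRR, trace_mul_cycle R (P a) R,
    trace_mul_comm (P a)]

variable [DecidableEq n]

lemma observable_posSemidef (hRH : R.IsHermitian) (hσ : ∀ s a, 0 ≤ σ s a)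
    (hϱ : ∀ s, (ϱ s).PosSemidef) (a : A) : (observable ϱ σ R a).PosSemidef := by
  refine posSemidef_sum _ fun s _ => PosSemidef.smul ?_ (hσ s a)
  simpa only [hRH.inv.eq] using (hϱ s).mul_mul_conjTranspose_same R⁻¹

variable [Fintype A]

lemma val_eq_sum_re_trace_conj_mul_observable (hR : IsUnit R) (P : A → Matrix n n ℂ) :
    val ϱ σ P = (∑ a, (R * P a * R * observable ϱ σ R a).trace.re) / normZ ϱ P := by
  simp only [val, induced, observable, Matrix.mul_sum, trace_sum, Complex.re_sum, Matrix.mul_smul,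
    trace_smul, ← trace_mul_eq_trace_conj_mul_conj_inv hR, Complex.real_smul, Complex.re_ofReal_mul,
    Finset.sum_div]
  rw [Finset.sum_comm]
  exact Finset.sum_congr rfl fun a _ => Finset.sum_congr rfl fun s _ => by ring

lemma val_le_iSup_opNorm_observable (hR : IsUnit R) (hRH : R.IsHermitian)
    (hRR : R * R = ∑ s, ϱ s) (hσ : ∀ s a, 0 ≤ σ s a) (hϱ : ∀ s, (ϱ s).PosSemidef)
    {P : A → Matrix n n ℂ} (hP : ∀ a, (P a).PosSemidef) (hZ : 0 < normZ ϱ P) :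
    val ϱ σ P ≤ ⨆ a, opNorm (observable ϱ σ R a) := by
  rw [val_eq_sum_re_trace_conj_mul_observable hR, div_le_iff₀ hZ,
    normZ_eq_sum_re_trace_conj hRR, Finset.mul_sum]
  refine Finset.sum_le_sum fun a _ => ?_
  have hT : (R * P a * R).PosSemidef := by
    simpa only [hRH.eq] using (hP a).mul_mul_conjTranspose_same R
  calc (R * P a * R * observable ϱ σ R a).trace.re
      ≤ opNorm (observable ϱ σ R a) * (R * P a * R).trace.re := by
        simpa only [Complex.re_ofReal_mul, opNorm_eq_norm] using Complex.le_def.mp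
          (hT.trace_mul_le_norm_mul_trace (observable_posSemidef hRH hσ hϱ a).isHermitian) |>.1
    _ ≤ (⨆ a, opNorm (observable ϱ σ R a)) * (R * P a * R).trace.re := by
        gcongr
        · exact Complex.nonneg_iff.mp hT.trace_nonneg |>.1
        · exact le_ciSup (f := fun a => opNorm (observable ϱ σ R a)) (Set.finite_range _).bddAbove a

lemma exists_val_eq_iSup_opNorm_observable [Nonempty n] [Nonempty A] (hR : IsUnit R)
    (hRH : R.IsHermitian) (hRR : R * R = ∑ s, ϱ s) (hσ : ∀ s a, 0 ≤ σ s a)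
    (hϱ : ∀ s, (ϱ s).PosSemidef) :
    ∃ P : A → Matrix n n ℂ, (∀ a, (P a).PosSemidef) ∧ 0 < normZ ϱ P ∧
      val ϱ σ P = ⨆ a, opNorm (observable ϱ σ R a) := by
  classical
  obtain ⟨a₀, ha₀⟩ := exists_eq_ciSup_of_finite (f := fun a => opNorm (observable ϱ σ R a))
  obtain ⟨Q, hQ, hQ1, hQO⟩ :=
    (observable_posSemidef hRH hσ hϱ a₀).exists_trace_eq_one_trace_mul_eq_norm
  set T : A → Matrix n n ℂ := Pi.single a₀ Q
  have hT : ∀ a, (T a).PosSemidef := fun a => by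
    by_cases h : a = a₀
    · subst h
      simpa [T] using hQ
    · simpa [T, h] using PosSemidef.zero
  have hZ : normZ ϱ (fun a => R⁻¹ * T a * R⁻¹) = 1 := by
    rw [normZ_eq_sum_re_trace_conj hRR, Fintype.sum_eq_single a₀ fun a h => by simp [T, h]]
    simp [conj_inv_conj_cancel hR, T, hQ1]
  refine ⟨fun a => R⁻¹ * T a * R⁻¹, fun a => ?_, hZ ▸ one_pos, ?_⟩
  · simpa only [hRH.inv.eq] using (hT a).mul_mul_conjTranspose_same R⁻¹
  · rw [val_eq_sum_re_trace_conj_mul_observable hR, hZ, div_one,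
      Fintype.sum_eq_single a₀ fun a h => by simp [T, h]]
    simp only [T, Pi.single_eq_same, conj_inv_conj_cancel hR, hQO, Complex.ofReal_re]
    exact ha₀

lemma isGreatest_val_iSup_opNorm_observable [Nonempty n] [Nonempty A] (hR : IsUnit R)
    (hRH : R.IsHermitian) (hRR : R * R = ∑ s, ϱ s) (hσ : ∀ s a, 0 ≤ σ s a)
    (hϱ : ∀ s, (ϱ s).PosSemidef) :
    IsGreatest {v | ∃ P : A → Matrix n n ℂ,
        (∀ a, (P a).PosSemidef) ∧ 0 < normZ ϱ P ∧ v = val ϱ σ P}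
      (⨆ a, opNorm (observable ϱ σ R a)) := by
  obtain ⟨P, hP, hZ, hval⟩ := exists_val_eq_iSup_opNorm_observable hR hRH hRR hσ hϱ
  exact ⟨⟨P, hP, hZ, hval.symm⟩, fun v ⟨P, hP, hZ, hv⟩ =>
    hv ▸ val_le_iSup_opNorm_observable hR hRH hRR hσ hϱ hP hZ⟩

end QRG

theorem selective_value_of_game_general {d : ℕ} {S A : Type} [Fintype S] [Fintype A]
    [Nonempty A]
    (ϱ : S → Matrix (Fin d) (Fin d) ℂ) (σ : S → A → ℝ)
    (hσ : ∀ s a, 0 ≤ σ s a)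
    (hpsd : ∀ s, (ϱ s).PosSemidef) (htr : ∑ s, (ϱ s).trace = 1)
    (hρ : (∑ s, ϱ s).PosDef) :
    sel ϱ σ = (⨆ a : A, opNorm (∑ s, σ s a •
        ((hρ.posSemidef.sqrt)⁻¹ * ϱ s * (hρ.posSemidef.sqrt)⁻¹))) ∧
    ∃ P : A → Matrix (Fin d) (Fin d) ℂ,
      (∀ a, (P a).PosSemidef) ∧ 0 < normZ ϱ P ∧ val ϱ σ P = sel ϱ σ := by
  have : Nonempty (Fin d) := by
    by_contra h
    simp [not_nonempty_iff.mp h, trace_eq_zero_of_isEmpty] at htr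
  have hgreatest := isGreatest_val_iSup_opNorm_observable hρ.isUnit_sqrt
    hρ.posSemidef.posSemidef_sqrt.isHermitian hρ.posSemidef.sqrt_mul_self hσ hpsd
  have hsel : sel ϱ σ = _ := hgreatest.csSup_eq
  obtain ⟨P, hP, hZ, hval⟩ := hgreatest.1
  exact ⟨hsel, P, hP, hZ, hval.symm.trans hsel.symm⟩

/-- Selective value of a weighted quantum retrieval game: with
`O(a) = ∑_s σ(s,a)·ρ^{−1/2} ϱ(s) ρ^{−1/2}`, the selective value equals
`max_a ‖O(a)‖` and is attained by some selective projection. -/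
theorem selective_value_of_game {d : ℕ} {S A : Type} [Fintype S] [Fintype A]
    [Nonempty S] [Nonempty A]
    (ϱ : S → Matrix (Fin d) (Fin d) ℂ) (σ : S → A → ℝ)
    (hσ : ∀ s a, 0 ≤ σ s a)
    (hpsd : ∀ s, (ϱ s).PosSemidef) (htr : ∑ s, (ϱ s).trace = 1)
    (hρ : (∑ s, ϱ s).PosDef) :
    sel ϱ σ = (⨆ a : A, opNorm (∑ s, σ s a •
        ((hρ.posSemidef.sqrt)⁻¹ * ϱ s * (hρ.posSemidef.sqrt)⁻¹))) ∧
    ∃ P : A → Matrix (Fin d) (Fin d) ℂ,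
      (∀ a, (P a).PosSemidef) ∧ 0 < normZ ϱ P ∧ val ϱ σ P = sel ϱ σ :=
  selective_value_of_game_general ϱ σ hσ hpsd htr hρ
end

section
/- Let G = (ϱ, σ) be a weighted quantum retrieval game with finite nonempty answer set A and positive definite reduced density matrix ρ = ∑_s ϱ(s), and set O(a) = ∑_{s∈S} σ(s,a) · ρ^{−1/2} ϱ(s) ρ^{−1/2}. Then Sel(G) = Phys(G) if and only if there exists a family of positive semidefinite d×d matrices P̃(a), a ∈ A, such that O(a)·P̃(a) = Sel(G)·P̃(a) for every a and ∑_{a∈A} P̃(a) = ρ. -/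
open Matrix
open scoped ComplexOrder
open scoped ComplexOrder

open QRG

/-- The square root of a positive semidefinite matrix, as `Matrix.PosSemidef.sqrt` was
defined in the older Mathlib (that declaration has since been removed). -/
noncomputable def posSemidefSqrt {n : Type*} [Fintype n] [DecidableEq n] {M : Matrix n n ℂ}
    (hM : M.PosSemidef) : Matrix n n ℂ :=
  hM.1.eigenvectorUnitary.1 * diagonal ((↑) ∘ (Real.sqrt ·) ∘ hM.1.eigenvalues) *
    (star hM.1.eigenvectorUnitary : Matrix n n ℂ)

/-!
Write `M(a) = ∑ₛ σ(s,a) ϱ(s)` and `ρ = R²` with `R` Hermitian, so that `O(a) = R⁻¹ M(a) R⁻¹`.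
Testing `Sel` against the selective projection that is a rank-one `x xᴴ` at a single answer `a`
gives `M(a) ≤ Sel • ρ`, i.e. `O(a) ≤ Sel • 1`. For a physical projection `P` put
`P̃(a) = R P(a) R`; then `∑ₐ Tr[(Sel • 1 - O(a)) P̃(a)] = Sel - Val(G,P)` is a sum of nonnegative
terms. Physical projections form a compact set, so `Phys` is attained; if `Sel = Phys`, every term
vanishes at a maximiser, and `Tr[XY] = 0` forces `XY = 0` for positive `X`, `Y`, which is the
eigen-equation. Conversely, such a family yields the physical projection `R⁻¹ P̃(a) R⁻¹` of value
`Sel`.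
-/

open scoped MatrixOrder

namespace Matrix

variable {n : Type*} [Fintype n] {A B C M R : Matrix n n ℂ}

lemma IsHermitian.posSemidef_of_re_dotProduct_mulVec_nonneg (hM : M.IsHermitian)
    (h : ∀ x, 0 ≤ (star x ⬝ᵥ M *ᵥ x).re) : M.PosSemidef :=
  .of_dotProduct_mulVec_nonneg hM fun x =>
    Complex.nonneg_iff.mpr ⟨h x, (hM.im_star_dotProduct_mulVec_self x).symm⟩

lemma PosSemidef.mul_mul_self_of_isHermitian (hA : A.PosSemidef) (hC : C.IsHermitian) :
    (C * A * C).PosSemidef := by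
  simpa only [hC.eq] using hA.mul_mul_conjTranspose_same C

lemma trace_vecMulVec_star_mul (x : n → ℂ) (M : Matrix n n ℂ) :
    (vecMulVec x (star x) * M).trace = star x ⬝ᵥ M *ᵥ x := by
  rw [vecMulVec_mul, trace_vecMulVec, dotProduct_comm, dotProduct_mulVec]

lemma trace_mul_mul_mul_comm (C X Y : Matrix n n ℂ) :
    (C * X * C * Y).trace = (X * (C * Y * C)).trace := by
  simp only [Matrix.mul_assoc]
  rw [trace_mul_comm C]
  simp only [Matrix.mul_assoc]

namespace PosSemidef

lemma trace_mul_nonneg_s10 (hA : A.PosSemidef) (hB : B.PosSemidef) : 0 ≤ (A * B).trace := by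
  classical
  obtain ⟨X, rfl⟩ := CStarAlgebra.nonneg_iff_eq_star_mul_self.mp hA.nonneg
  rw [star_eq_conjTranspose, Matrix.mul_assoc, trace_mul_comm]
  exact (hB.mul_mul_conjTranspose_same X).trace_nonneg

lemma trace_mul_eq_zero_iff (hA : A.PosSemidef) (hB : B.PosSemidef) :
    (A * B).trace = 0 ↔ A * B = 0 := by
  classical
  refine ⟨fun h => ?_, fun h => by rw [h, trace_zero]⟩
  obtain ⟨X, rfl⟩ := CStarAlgebra.nonneg_iff_eq_star_mul_self.mp hA.nonneg
  obtain ⟨Y, rfl⟩ := CStarAlgebra.nonneg_iff_eq_star_mul_self.mp hB.nonneg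
  -- `Tr[Xᴴ X Yᴴ Y]` is the squared Frobenius norm of `X Yᴴ`.
  simp only [star_eq_conjTranspose] at h ⊢
  have hXY : X * Yᴴ = 0 := by
    rw [← trace_mul_conjTranspose_self_eq_zero_iff, conjTranspose_mul, conjTranspose_conjTranspose,
      ← h]
    simp only [Matrix.mul_assoc]
    rw [trace_mul_comm Xᴴ]
    simp only [Matrix.mul_assoc]
  rw [Matrix.mul_assoc, ← Matrix.mul_assoc X, hXY, Matrix.zero_mul, Matrix.mul_zero]

end PosSemidef

variable [DecidableEq n]

lemma posSemidefSqrt_eq_cfcSqrt (hM : M.PosSemidef) : posSemidefSqrt hM = CFC.sqrt M := by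
  rw [CFC.sqrt_eq_real_sqrt M hM.nonneg, cfcₙ_eq_cfc, hM.1.cfc_eq]
  rfl

lemma posSemidefSqrt_mul_self (hM : M.PosSemidef) :
    posSemidefSqrt hM * posSemidefSqrt hM = M := by
  rw [posSemidefSqrt_eq_cfcSqrt]
  exact CFC.sqrt_mul_sqrt_self M hM.nonneg

lemma isHermitian_posSemidefSqrt (hM : M.PosSemidef) : (posSemidefSqrt hM).IsHermitian := by
  rw [posSemidefSqrt_eq_cfcSqrt]
  exact (CFC.sqrt_nonneg M).posSemidef.isHermitian

lemma isUnit_det_of_mul_self_eq (hRR : R * R = M) (hM : IsUnit M) : IsUnit R.det := by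
  rw [← hRR, isUnit_iff_isUnit_det, det_mul] at hM
  exact isUnit_of_mul_isUnit_left hM

lemma nonsing_inv_mul_mul_nonsing_inv_of_mul_self_eq (hRR : R * R = M) (hM : IsUnit M) :
    R⁻¹ * M * R⁻¹ = 1 := by
  have hR := isUnit_det_of_mul_self_eq hRR hM
  rw [← hRR, nonsing_inv_mul_cancel_left _ _ hR, mul_nonsing_inv _ hR]

lemma nonsing_inv_mul_mul_mul_nonsing_inv_cancel (hR : IsUnit R.det) (X : Matrix n n ℂ) :
    R⁻¹ * (R * X * R) * R⁻¹ = X := by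
  rw [Matrix.mul_assoc R, nonsing_inv_mul_cancel_left _ _ hR, mul_nonsing_inv_cancel_right _ _ hR]

open scoped Norms.L2Operator in
lemma isCompact_setOf_posSemidef_sum_eq_one {ι : Type*} [Fintype ι] :
    IsCompact {P : ι → Matrix n n ℂ | (∀ i, (P i).PosSemidef) ∧ ∑ i, P i = 1} := by
  simp only [← nonneg_iff_posSemidef]
  have hclosed : IsClosed {P : ι → Matrix n n ℂ | (∀ i, 0 ≤ P i) ∧ ∑ i, P i = 1} := by
    rw [Set.ofPred_and, Set.ofPred_forall]
    exact (isClosed_iInter fun i =>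
      CStarAlgebra.isClosed_nonneg.preimage (continuous_apply i)).inter
        (isClosed_eq (f := fun P : ι → Matrix n n ℂ => ∑ i, P i) (by fun_prop) continuous_const)
  refine (isCompact_univ_pi fun _ => isCompact_closedBall 0 ‖(1 : Matrix n n ℂ)‖)
    |>.of_isClosed_subset hclosed ?_
  rintro P ⟨hP, hsum⟩ i -
  rw [mem_closedBall_zero_iff, ← hsum]
  exact CStarAlgebra.norm_le_norm_of_nonneg_of_le (hP i)
    (Finset.single_le_sum (fun j _ => hP j) (Finset.mem_univ i))

end Matrix

namespace QRG

variable {n S A : Type*}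

/-- `M(a)`; the operator `O(a)` of the theorem is `utilityOp (fun s => R⁻¹ * ϱ s * R⁻¹) σ a`
with `R = ρ^{1/2}`. -/
noncomputable def utilityOp [Fintype S] (ϱ : S → Matrix n n ℂ) (σ : S → A → ℝ) (a : A) :
    Matrix n n ℂ :=
  ∑ s, σ s a • ϱ s

noncomputable def gain [Fintype n] [Fintype S] [Fintype A] (ϱ : S → Matrix n n ℂ)
    (σ : S → A → ℝ) (P : A → Matrix n n ℂ) : ℝ :=
  (∑ a, (P a * utilityOp ϱ σ a).trace).re

variable (n A) in
def physicalProjections [Fintype n] [DecidableEq n] [Fintype A] : Set (A → Matrix n n ℂ) :=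
  {P | (∀ a, (P a).PosSemidef) ∧ ∑ a, P a = 1}

variable [Fintype S] {ϱ : S → Matrix n n ℂ} {σ : S → A → ℝ}

lemma isHermitian_utilityOp (hϱ : ∀ s, (ϱ s).IsHermitian) (a : A) :
    (utilityOp ϱ σ a).IsHermitian :=
  isSelfAdjoint_sum _ fun s _ => (hϱ s).smul (IsSelfAdjoint.all (σ s a))

variable [Fintype n]

lemma utilityOp_conj (C : Matrix n n ℂ) (a : A) :
    utilityOp (fun s => C * ϱ s * C) σ a = C * utilityOp ϱ σ a * C := by
  simp only [utilityOp, Matrix.mul_sum, Matrix.sum_mul, mul_smul_comm, smul_mul_assoc]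

variable [Fintype A] {P : A → Matrix n n ℂ}

lemma normZ_eq_re_trace : normZ ϱ P = ((∑ a, P a) * ∑ s, ϱ s).trace.re := by
  simp only [normZ, Finset.sum_mul_sum, trace_sum, Complex.re_sum]
  exact Finset.sum_comm

lemma val_eq_gain_div : val ϱ σ P = gain ϱ σ P / normZ ϱ P := by
  simp only [val, induced, gain, utilityOp, div_mul_eq_mul_div, ← Finset.sum_div, Finset.mul_sum,
    trace_sum, mul_smul_comm, trace_smul, Complex.re_sum, Complex.real_smul, Complex.re_ofReal_mul]
  rw [Finset.sum_comm]
  simp only [mul_comm]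

lemma val_single [DecidableEq A] (a : A) (B : Matrix n n ℂ) :
    val ϱ σ (Pi.single a B) = (B * utilityOp ϱ σ a).trace.re / (B * ∑ s, ϱ s).trace.re := by
  rw [val_eq_gain_div, normZ_eq_re_trace, gain, Finset.sum_pi_single', if_pos (Finset.mem_univ a),
    Fintype.sum_eq_single a fun b hb => by rw [Pi.single_eq_of_ne hb, Matrix.zero_mul, trace_zero],
    Pi.single_eq_same]

lemma induced_nonneg (hϱ : ∀ s, (ϱ s).PosSemidef) (hP : ∀ a, (P a).PosSemidef) (s : S) (a : A) :
    0 ≤ induced ϱ P s a := by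
  have h s a := (Complex.nonneg_iff.mp ((hP a).trace_mul_nonneg_s10 (hϱ s))).1
  exact div_nonneg (h s a) (Finset.sum_nonneg fun s _ => Finset.sum_nonneg fun a _ => h s a)

lemma sum_induced (hZ : normZ ϱ P ≠ 0) : ∑ s, ∑ a, induced ϱ P s a = 1 := by
  simp only [induced, ← Finset.sum_div]
  exact div_self hZ

lemma val_le_of_forall_le {C : ℝ} (hϱ : ∀ s, (ϱ s).PosSemidef) (hP : ∀ a, (P a).PosSemidef)
    (hZ : normZ ϱ P ≠ 0) (hC : ∀ s a, σ s a ≤ C) : val ϱ σ P ≤ C :=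
  calc val ϱ σ P ≤ ∑ s, ∑ a, induced ϱ P s a * C :=
        Finset.sum_le_sum fun s _ => Finset.sum_le_sum fun a _ =>
          mul_le_mul_of_nonneg_left (hC s a) (induced_nonneg hϱ hP s a)
    _ = C := by simp only [← Finset.sum_mul, sum_induced hZ, one_mul]

lemma bddAbove_selectiveValues (hϱ : ∀ s, (ϱ s).PosSemidef) :
    BddAbove {v | ∃ P : A → Matrix n n ℂ,
      (∀ a, (P a).PosSemidef) ∧ 0 < normZ ϱ P ∧ v = val ϱ σ P} := by
  obtain ⟨C, hC⟩ := (Set.finite_range (Function.uncurry σ)).bddAbove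
  refine ⟨C, ?_⟩
  rintro _ ⟨P, hP, hZ, rfl⟩
  exact val_le_of_forall_le hϱ hP hZ.ne' fun s a => hC ⟨(s, a), rfl⟩

lemma val_le_sel (hϱ : ∀ s, (ϱ s).PosSemidef) (hP : ∀ a, (P a).PosSemidef)
    (hZ : 0 < normZ ϱ P) : val ϱ σ P ≤ sel ϱ σ :=
  le_csSup (bddAbove_selectiveValues hϱ) ⟨P, hP, hZ, rfl⟩

lemma continuous_gain : Continuous (gain ϱ σ) := by
  unfold gain
  fun_prop

lemma posSemidef_sel_smul_sub_utilityOp (hϱ : ∀ s, (ϱ s).PosSemidef)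
    (hρ : (∑ s, ϱ s).PosDef) (a : A) :
    (sel ϱ σ • ∑ s, ϱ s - utilityOp ϱ σ a).PosSemidef := by
  classical
  have hH : (sel ϱ σ • ∑ s, ϱ s - utilityOp ϱ σ a).IsHermitian :=
    (hρ.isHermitian.smul (IsSelfAdjoint.all _)).sub
      (isHermitian_utilityOp (fun s => (hϱ s).isHermitian) a)
  refine hH.posSemidef_of_re_dotProduct_mulVec_nonneg fun x => ?_
  rcases eq_or_ne x 0 with rfl | hx
  · simp
  have hpos : 0 < (star x ⬝ᵥ (∑ s, ϱ s) *ᵥ x).re := hρ.re_dotProduct_pos hx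
  set B := vecMulVec x (star x)
  have hP : ∀ b, ((Pi.single a B : A → Matrix n n ℂ) b).PosSemidef := by
    intro b
    rcases eq_or_ne b a with rfl | hb
    · simpa using posSemidef_vecMulVec_self_star x
    · simpa [Pi.single_eq_of_ne hb] using PosSemidef.zero
  have hZ : 0 < normZ ϱ (Pi.single a B) := by
    rwa [normZ_eq_re_trace, Finset.sum_pi_single', if_pos (Finset.mem_univ a),
      trace_vecMulVec_star_mul]
  have hle := val_le_sel (σ := σ) hϱ hP hZ
  rw [val_single, trace_vecMulVec_star_mul, trace_vecMulVec_star_mul, div_le_iff₀ hpos] at hle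
  simpa [sub_mulVec, dotProduct_sub, smul_mulVec, dotProduct_smul] using hle

variable [DecidableEq n]

lemma normZ_eq_one (htr : ∑ s, (ϱ s).trace = 1) (hP : ∑ a, P a = 1) : normZ ϱ P = 1 := by
  rw [normZ_eq_re_trace, hP, Matrix.one_mul, trace_sum, htr, Complex.one_re]

lemma val_eq_gain (htr : ∑ s, (ϱ s).trace = 1) (hP : ∑ a, P a = 1) :
    val ϱ σ P = gain ϱ σ P := by
  rw [val_eq_gain_div, normZ_eq_one htr hP, div_one]

lemma phys_eq_sSup_image : phys ϱ σ = sSup (val ϱ σ '' physicalProjections n A) := by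
  simp only [phys, physicalProjections, Set.image, Set.mem_ofPred_eq, and_assoc, eq_comm]

lemma val_le_phys (hϱ : ∀ s, (ϱ s).PosSemidef) (htr : ∑ s, (ϱ s).trace = 1)
    (hP : P ∈ physicalProjections n A) : val ϱ σ P ≤ phys ϱ σ := by
  refine le_csSup ((bddAbove_selectiveValues (σ := σ) hϱ).mono ?_) ⟨P, hP.1, hP.2, rfl⟩
  rintro _ ⟨Q, hQ, hsum, rfl⟩
  exact ⟨Q, hQ, by rw [normZ_eq_one htr hsum]; exact one_pos, rfl⟩

lemma physicalProjections_nonempty [Nonempty A] : (physicalProjections n A).Nonempty := by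
  refine ⟨fun _ => (Fintype.card A : ℝ)⁻¹ • 1, fun _ => PosSemidef.one.smul (by positivity), ?_⟩
  rw [Finset.sum_const, Finset.card_univ, ← Nat.cast_smul_eq_nsmul ℝ, smul_smul,
    mul_inv_cancel₀ (Nat.cast_ne_zero.mpr Fintype.card_ne_zero), one_smul]

lemma exists_phys_eq_val [Nonempty A] (htr : ∑ s, (ϱ s).trace = 1) :
    ∃ P ∈ physicalProjections n A, phys ϱ σ = val ϱ σ P := by
  have hval : Set.EqOn (val ϱ σ) (gain ϱ σ) (physicalProjections n A) :=
    fun P hP => val_eq_gain htr hP.2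
  have hK : IsCompact (physicalProjections n A) := isCompact_setOf_posSemidef_sum_eq_one
  obtain ⟨P, hP, hmax⟩ := hK.exists_sSup_image_eq
    physicalProjections_nonempty (continuous_gain (ϱ := ϱ) (σ := σ)).continuousOn
  exact ⟨P, hP, by rw [phys_eq_sSup_image, hval.image_eq, hmax, hval hP]⟩

lemma phys_le_sel [Nonempty A] (hϱ : ∀ s, (ϱ s).PosSemidef) (htr : ∑ s, (ϱ s).trace = 1) :
    phys ϱ σ ≤ sel ϱ σ := by
  obtain ⟨P, hP, hphys⟩ := exists_phys_eq_val (σ := σ) htr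
  rw [hphys]
  exact val_le_sel hϱ hP.1 (by rw [normZ_eq_one htr hP.2]; exact one_pos)

variable {R : Matrix n n ℂ}

lemma posSemidef_sel_smul_one_sub_utilityOp_conj (hϱ : ∀ s, (ϱ s).PosSemidef)
    (hρ : (∑ s, ϱ s).PosDef) (hR : R.IsHermitian) (hRR : R * R = ∑ s, ϱ s) (a : A) :
    (sel ϱ σ • 1 - utilityOp (fun s => R⁻¹ * ϱ s * R⁻¹) σ a).PosSemidef := by
  convert (posSemidef_sel_smul_sub_utilityOp hϱ hρ a).mul_mul_self_of_isHermitian hR.inv using 1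
  rw [utilityOp_conj, Matrix.mul_sub, Matrix.sub_mul, mul_smul_comm, smul_mul_assoc,
    nonsing_inv_mul_mul_nonsing_inv_of_mul_self_eq hRR hρ.isUnit]

lemma exists_eigenfamily_of_sel_eq_phys [Nonempty A] (hϱ : ∀ s, (ϱ s).PosSemidef)
    (htr : ∑ s, (ϱ s).trace = 1) (hρ : (∑ s, ϱ s).PosDef) (hR : R.IsHermitian)
    (hRR : R * R = ∑ s, ϱ s) (h : sel ϱ σ = phys ϱ σ) :
    ∃ Pt : A → Matrix n n ℂ, (∀ a, (Pt a).PosSemidef) ∧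
      (∀ a, utilityOp (fun s => R⁻¹ * ϱ s * R⁻¹) σ a * Pt a = sel ϱ σ • Pt a) ∧
      ∑ a, Pt a = ∑ s, ϱ s := by
  obtain ⟨P, ⟨hP, hsum⟩, hphys⟩ := exists_phys_eq_val (σ := σ) htr
  have hRu := isUnit_det_of_mul_self_eq hRR hρ.isUnit
  set D := fun a => sel ϱ σ • 1 - utilityOp (fun s => R⁻¹ * ϱ s * R⁻¹) σ a
  have hD a : (D a).PosSemidef := posSemidef_sel_smul_one_sub_utilityOp_conj hϱ hρ hR hRR a
  have hPt a : (R * P a * R).PosSemidef := (hP a).mul_mul_self_of_isHermitian hR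
  have hterm_nonneg a : 0 ≤ (D a * (R * P a * R)).trace := (hD a).trace_mul_nonneg_s10 (hPt a)
  have hterm a : (D a * (R * P a * R)).trace =
      sel ϱ σ • (R * P a * R).trace - (P a * utilityOp ϱ σ a).trace := by
    rw [Matrix.sub_mul, trace_sub, smul_mul_assoc, Matrix.one_mul, trace_smul, utilityOp_conj,
      trace_mul_mul_mul_comm, nonsing_inv_mul_mul_mul_nonsing_inv_cancel hRu,
      trace_mul_comm (utilityOp ϱ σ a)]
  have hsum_zero : ∑ a, (D a * (R * P a * R)).trace = 0 := by
    refine Complex.ext ?_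
      (Complex.nonneg_iff.mp (Finset.sum_nonneg fun a _ => hterm_nonneg a)).2.symm
    calc (∑ a, (D a * (R * P a * R)).trace).re
        = sel ϱ σ * (∑ a, (R * P a * R).trace).re - gain ϱ σ P := by
          simp only [hterm, Finset.sum_sub_distrib, Complex.sub_re, Complex.real_smul,
            ← Finset.mul_sum, Complex.re_ofReal_mul, gain]
      _ = sel ϱ σ - phys ϱ σ := by
          rw [← trace_sum, ← Finset.sum_mul, ← Finset.mul_sum, hsum, Matrix.mul_one, hRR, trace_sum,
            htr, Complex.one_re, mul_one, hphys, val_eq_gain htr hsum]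
      _ = 0 := sub_eq_zero.mpr h
  refine ⟨fun a => R * P a * R, hPt, fun a => ?_, ?_⟩
  · have hzero := ((hD a).trace_mul_eq_zero_iff (hPt a)).mp
      ((Finset.sum_eq_zero_iff_of_nonneg fun a _ => hterm_nonneg a).mp hsum_zero a
        (Finset.mem_univ a))
    rwa [Matrix.sub_mul, smul_mul_assoc, Matrix.one_mul, sub_eq_zero, eq_comm] at hzero
  · rw [← Finset.sum_mul, ← Finset.mul_sum, hsum, Matrix.mul_one, hRR]

lemma sel_le_phys_of_eigenfamily (hϱ : ∀ s, (ϱ s).PosSemidef) (htr : ∑ s, (ϱ s).trace = 1)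
    (hρ : (∑ s, ϱ s).PosDef) (hR : R.IsHermitian) (hRR : R * R = ∑ s, ϱ s)
    {Pt : A → Matrix n n ℂ} (hPt : ∀ a, (Pt a).PosSemidef)
    (heig : ∀ a, utilityOp (fun s => R⁻¹ * ϱ s * R⁻¹) σ a * Pt a = sel ϱ σ • Pt a)
    (hsum : ∑ a, Pt a = ∑ s, ϱ s) :
    sel ϱ σ ≤ phys ϱ σ := by
  have hQ : (fun a => R⁻¹ * Pt a * R⁻¹) ∈ physicalProjections n A :=
    ⟨fun a => (hPt a).mul_mul_self_of_isHermitian hR.inv, by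
      rw [← Finset.sum_mul, ← Finset.mul_sum, hsum,
        nonsing_inv_mul_mul_nonsing_inv_of_mul_self_eq hRR hρ.isUnit]⟩
  calc sel ϱ σ = val ϱ σ (fun a => R⁻¹ * Pt a * R⁻¹) := by
        rw [val_eq_gain htr hQ.2, gain]
        simp only [trace_mul_mul_mul_comm, ← utilityOp_conj, trace_mul_comm (Pt _), heig,
          trace_smul, ← Finset.smul_sum, ← trace_sum, hsum]
        rw [trace_sum, htr, Complex.real_smul, mul_one, Complex.ofReal_re]
    _ ≤ phys ϱ σ := val_le_phys hϱ htr hQ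

end QRG

theorem sel_eq_phys_iff_general {d : ℕ} {S A : Type} [Fintype S] [Fintype A]
    [Nonempty A]
    (ϱ : S → Matrix (Fin d) (Fin d) ℂ) (σ : S → A → ℝ)
    (hpsd : ∀ s, (ϱ s).PosSemidef) (htr : ∑ s, (ϱ s).trace = 1)
    (hρ : (∑ s, ϱ s).PosDef) :
    sel ϱ σ = phys ϱ σ ↔
      ∃ Pt : A → Matrix (Fin d) (Fin d) ℂ,
        (∀ a, (Pt a).PosSemidef) ∧
        (∀ a, (∑ s, σ s a • ((posSemidefSqrt hρ.posSemidef)⁻¹ * ϱ s * (posSemidefSqrt hρ.posSemidef)⁻¹)) *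
            Pt a = sel ϱ σ • Pt a) ∧
        (∑ a, Pt a) = ∑ s, ϱ s := by
  have hR := isHermitian_posSemidefSqrt hρ.posSemidef
  have hRR := posSemidefSqrt_mul_self hρ.posSemidef
  refine ⟨exists_eigenfamily_of_sel_eq_phys hpsd htr hρ hR hRR, ?_⟩
  rintro ⟨Pt, hPt, heig, hsum⟩
  exact (phys_le_sel hpsd htr).antisymm'
    (sel_le_phys_of_eigenfamily hpsd htr hρ hR hRR hPt heig hsum)

/-- The selective and physical values of a weighted quantum retrieval game coincide
iff there exists a family of positive semidefinite matrices `P̃(a)` with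
`O(a)·P̃(a) = Sel(G)·P̃(a)` for every `a` and `∑_a P̃(a) = ρ`. -/
theorem sel_eq_phys_iff {d : ℕ} {S A : Type} [Fintype S] [Fintype A]
    [Nonempty S] [Nonempty A]
    (ϱ : S → Matrix (Fin d) (Fin d) ℂ) (σ : S → A → ℝ)
    (hσ : ∀ s a, 0 ≤ σ s a)
    (hpsd : ∀ s, (ϱ s).PosSemidef) (htr : ∑ s, (ϱ s).trace = 1)
    (hρ : (∑ s, ϱ s).PosDef) :
    sel ϱ σ = phys ϱ σ ↔
      ∃ Pt : A → Matrix (Fin d) (Fin d) ℂ,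
        (∀ a, (Pt a).PosSemidef) ∧
        (∀ a, (∑ s, σ s a • ((posSemidefSqrt hρ.posSemidef)⁻¹ * ϱ s * (posSemidefSqrt hρ.posSemidef)⁻¹)) *
            Pt a = sel ϱ σ • Pt a) ∧
        (∑ a, Pt a) = ∑ s, ϱ s :=
  sel_eq_phys_iff_general ϱ σ hpsd htr hρ
end
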